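/- arXiv:math/9909167 — 4 statements merged into one kernel-verified Lean document; each statement's English description precedes it below -/
import Mathlib

section
/- (Law of Large Numbers for word lengths.) Let G be a group generated by a finite symmetric set S with word length l_S, let μ be a probability measure supported on S, and suppose the drift l = l(μ) is not zero. Then for every ε > 0 there exists N such that for all n ≥ N: μ^{*n}({g : |l_S(g)/(l·n) − 1| ≤ ε}) ≥ 1 − ε. -/
set_option linter.unusedSectionVars false
set_option linter.unusedTactic false
set_option maxHeartbeats 1000000

open Filter

/-- The word length of `g` with respect to a generating set `S`. -/
noncomputable def wordLength {G : Type*} [Group G] (S : Set G) (g : G) : ℕ :=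
  sInf {n | ∃ w : List G, (∀ x ∈ w, x ∈ S) ∧ w.length = n ∧ w.prod = g}

/-- Convolution of two densities on a group: `(ν₁ * ν₂)(g) = Σ_{ab = g} ν₁(a) ν₂(b)`. -/
noncomputable def convMeas {G : Type*} [Group G] (ν₁ ν₂ : G → ℝ) : G → ℝ :=
  fun g => ∑ᶠ a, ν₁ a * ν₂ (a⁻¹ * g)

/-- The `n`-fold convolution `μ^{*n}` of a density `μ` with itself. -/
noncomputable def convPow {G : Type*} [Group G] (μ : G → ℝ) : ℕ → G → ℝ
  | 0 => Set.indicator {(1 : G)} (fun _ => (1 : ℝ))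
  | n + 1 => convMeas (convPow μ n) μ

/-- `l_n(μ) = Σ_g μ^{*n}(g) l_S(g)`, the expected word length after `n` steps. -/
noncomputable def meanLength {G : Type*} [Group G] (S : Set G) (μ : G → ℝ) (n : ℕ) : ℝ :=
  ∑ᶠ g, convPow μ n g * (wordLength S g : ℝ)

namespace LLNAux

section NoDec
variable {G : Type*} [Group G]

theorem exists_word {S : Set G} (hSsym : ∀ s ∈ S, s⁻¹ ∈ S)
    (hSgen : Subgroup.closure S = ⊤) (g : G) :
    ∃ w : List G, (∀ x ∈ w, x ∈ S) ∧ w.prod = g := by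
  have hg : g ∈ (Subgroup.closure S).toSubmonoid := by
    rw [hSgen]; trivial
  rw [Subgroup.closure_toSubmonoid] at hg
  obtain ⟨w, hw, hprod⟩ := Submonoid.exists_list_of_mem_closure hg
  refine ⟨w, fun x hx => ?_, hprod⟩
  rcases hw x hx with h | h
  · exact h
  · simpa using hSsym _ h

theorem wordLength_spec {S : Set G} (hSsym : ∀ s ∈ S, s⁻¹ ∈ S)
    (hSgen : Subgroup.closure S = ⊤) (g : G) :
    ∃ w : List G, (∀ x ∈ w, x ∈ S) ∧ w.length = wordLength S g ∧ w.prod = g := by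
  have hne : {n | ∃ w : List G, (∀ x ∈ w, x ∈ S) ∧ w.length = n ∧ w.prod = g}.Nonempty := by
    obtain ⟨w, hw, hp⟩ := exists_word hSsym hSgen g
    exact ⟨w.length, w, hw, rfl, hp⟩
  exact Nat.sInf_mem hne

theorem wordLength_le {S : Set G} (w : List G) (hw : ∀ x ∈ w, x ∈ S) :
    wordLength S w.prod ≤ w.length :=
  Nat.sInf_le ⟨w, hw, rfl, rfl⟩

theorem wordLength_mul_le {S : Set G} (hSsym : ∀ s ∈ S, s⁻¹ ∈ S)
    (hSgen : Subgroup.closure S = ⊤) (a b : G) :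
    wordLength S (a * b) ≤ wordLength S a + wordLength S b := by
  obtain ⟨u, hu, hul, hup⟩ := wordLength_spec hSsym hSgen a
  obtain ⟨v, hv, hvl, hvp⟩ := wordLength_spec hSsym hSgen b
  have := wordLength_le (S := S) (u ++ v) (by
    intro x hx; rcases List.mem_append.1 hx with h | h
    · exact hu x h
    · exact hv x h)
  simpa [hup, hvp, hul, hvl] using this


end NoDec

section Dec
variable {G : Type*} [Group G] [DecidableEq G]

/-- Words of length `n` over alphabet `Sf`. -/
def words (Sf : Finset G) : ℕ → Finset (List G)
  | 0 => {([] : List G)}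
  | n + 1 => ((words Sf n) ×ˢ Sf).image (fun p => p.1 ++ [p.2])

theorem mem_words {Sf : Finset G} {n : ℕ} {w : List G} :
    w ∈ words Sf n ↔ w.length = n ∧ ∀ x ∈ w, x ∈ Sf := by
  induction n generalizing w with
  | zero =>
    constructor
    · intro h
      simp only [words, Finset.mem_singleton] at h
      subst h; simp
    · rintro ⟨hl, -⟩
      simp only [words, Finset.mem_singleton]
      exact List.length_eq_zero_iff.1 hl
  | succ n ih =>
    simp only [words, Finset.mem_image, Finset.mem_product, Prod.exists]
    constructor
    · rintro ⟨u, s, ⟨hu, hs⟩, rfl⟩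
      rw [ih] at hu
      refine ⟨by simp [hu.1], ?_⟩
      intro x hx
      rcases List.mem_append.1 hx with h | h
      · exact hu.2 x h
      · simpa using (List.mem_singleton.1 h) ▸ hs
    · rintro ⟨hl, hmem⟩
      have hne : w ≠ [] := by intro h; simp [h] at hl
      refine ⟨w.dropLast, w.getLast hne, ⟨?_, ?_⟩, ?_⟩
      · rw [ih]
        constructor
        · simp [List.length_dropLast, hl]
        · intro x hx; exact hmem x (List.dropLast_subset w hx)
      · exact hmem _ (List.getLast_mem hne)
      · exact List.dropLast_append_getLast hne

/-- The weight of a word under `μ`. -/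
def wt (μ : G → ℝ) (w : List G) : ℝ := (w.map μ).prod

theorem wt_nonneg' {μ : G → ℝ} (hpos : ∀ g, 0 ≤ μ g) (w : List G) : 0 ≤ wt μ w := by
  apply List.prod_nonneg
  intro x hx
  obtain ⟨a, _, rfl⟩ := List.mem_map.1 hx
  exact hpos a

theorem wt_append (μ : G → ℝ) (u v : List G) : wt μ (u ++ v) = wt μ u * wt μ v := by
  simp [wt]

/-- Splitting a sum over `words (n+m)` into a double sum. -/
theorem sum_words_split {Sf : Finset G} (μ : G → ℝ) (n m : ℕ) (f : List G → ℝ) :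
    ∑ w ∈ words Sf (n + m), wt μ w * f w
      = ∑ u ∈ words Sf n, ∑ v ∈ words Sf m, wt μ u * wt μ v * f (u ++ v) := by
  rw [← Finset.sum_product']
  refine Finset.sum_nbij' (fun w => (w.take n, w.drop n)) (fun p => p.1 ++ p.2) ?_ ?_ ?_ ?_ ?_
  · intro w hw
    rw [mem_words] at hw
    simp only [Finset.mem_product, mem_words]
    refine ⟨⟨?_, ?_⟩, ?_, ?_⟩
    · simp [List.length_take, hw.1]
    · intro x hx; exact hw.2 x (List.take_subset n w hx)
    · simp [List.length_drop, hw.1]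
    · intro x hx; exact hw.2 x (List.drop_subset n w hx)
  · intro p hp
    simp only [Finset.mem_product, mem_words] at hp
    rw [mem_words]
    refine ⟨by simp [hp.1.1, hp.2.1], ?_⟩
    intro x hx
    rcases List.mem_append.1 hx with h | h
    · exact hp.1.2 x h
    · exact hp.2.2 x h
  · intro w hw; exact List.take_append_drop n w
  · intro p hp
    simp only [Finset.mem_product, mem_words] at hp
    have h1 : (p.1 ++ p.2).take n = p.1 := by
      rw [List.take_append_of_le_length (le_of_eq hp.1.1.symm)]
      simp [hp.1.1]
    have h2 : (p.1 ++ p.2).drop n = p.2 := by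
      rw [List.drop_append_of_le_length (le_of_eq hp.1.1.symm)]
      simp [hp.1.1]
    simp [h1, h2]
  · intro w hw
    simp only
    rw [← wt_append, List.take_append_drop]

theorem sum_wt_eq_one' {S : Set G} (hSfin : S.Finite) {μ : G → ℝ}
    (hsum : ∑ᶠ g, μ g = 1) (hsupp : Function.support μ ⊆ S) (n : ℕ) :
    ∑ w ∈ words hSfin.toFinset n, wt μ w = 1 := by
  have hS : ∑ s ∈ hSfin.toFinset, μ s = 1 := by
    rw [← hsum]
    exact (finsum_eq_finset_sum_of_support_subset μ (by simpa using hsupp)).symm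
  induction n with
  | zero => simp [words, wt]
  | succ n ih =>
    have := sum_words_split (Sf := hSfin.toFinset) μ n 1 (fun _ => 1)
    have h1 : ∑ w ∈ words hSfin.toFinset 1, wt μ w = 1 := by
      have : words hSfin.toFinset 1 = hSfin.toFinset.image (fun s => [s]) := by
        ext w
        simp only [mem_words, Finset.mem_image]
        constructor
        · rintro ⟨hl, hm⟩
          match w, hl with
          | [x], _ => exact ⟨x, hm x (by simp), rfl⟩
        · rintro ⟨s, hs, rfl⟩; exact ⟨rfl, by simpa using hs⟩
      rw [this, Finset.sum_image (by intro a _ b _ h; simpa using h)]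
      simpa [wt] using hS
    calc ∑ w ∈ words hSfin.toFinset (n + 1), wt μ w
        = ∑ u ∈ words hSfin.toFinset n, ∑ v ∈ words hSfin.toFinset 1, wt μ u * wt μ v * 1 := by
          simpa using this
      _ = 1 := by
          simp only [mul_one, ← Finset.mul_sum, h1, mul_one, ih]


theorem words_one {Sf : Finset G} : words Sf 1 = Sf.image (fun s => [s]) := by
  ext w
  simp only [mem_words, Finset.mem_image]
  constructor
  · rintro ⟨hl, hm⟩
    match w, hl with
    | [x], _ => exact ⟨x, hm x (by simp), rfl⟩
  · rintro ⟨s, hs, rfl⟩; exact ⟨rfl, by simpa using hs⟩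

theorem convPow_eq {S : Set G} (hSfin : S.Finite) {μ : G → ℝ}
    (hsupp : Function.support μ ⊆ S) (n : ℕ) (g : G) :
    convPow μ n g
      = ∑ w ∈ words hSfin.toFinset n, if w.prod = g then wt μ w else 0 := by
  set Sf := hSfin.toFinset with hSf
  have hμ0 : ∀ x : G, x ∉ Sf → μ x = 0 := by
    intro x hx
    by_contra h
    exact hx (by simpa [hSf] using hsupp h)
  induction n generalizing g with
  | zero =>
    simp only [convPow, Set.indicator_apply, words, Finset.sum_singleton, List.prod_nil, wt,
      List.map_nil, List.prod_nil]
    by_cases h : g = 1 <;> simp [h, eq_comm]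
  | succ n ih =>
    have hT : ∀ a, a ∉ (words Sf n).image List.prod → convPow μ n a = 0 := by
      intro a ha
      rw [ih]
      apply Finset.sum_eq_zero
      intro w hw
      rw [if_neg]
      intro h
      exact ha (Finset.mem_image.2 ⟨w, hw, h⟩)
    have hsuppfin : Function.support (fun a => convPow μ n a * μ (a⁻¹ * g))
        ⊆ ↑((words Sf n).image List.prod) := by
      intro a ha
      by_contra h
      exact ha (by simp [hT a (by simpa using h)])
    show convMeas (convPow μ n) μ g = _
    unfold convMeas
    rw [finsum_eq_finset_sum_of_support_subset _ hsuppfin]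
    have lhs_eq : ∑ a ∈ (words Sf n).image List.prod, convPow μ n a * μ (a⁻¹ * g)
        = ∑ w ∈ words Sf n, wt μ w * μ (w.prod⁻¹ * g) := by
      have : ∀ a ∈ (words Sf n).image List.prod,
          convPow μ n a * μ (a⁻¹ * g)
            = ∑ w ∈ words Sf n, if w.prod = a then wt μ w * μ (a⁻¹ * g) else 0 := by
        intro a _
        rw [ih, Finset.sum_mul]
        exact Finset.sum_congr rfl fun w _ => by rw [ite_mul, zero_mul]
      rw [Finset.sum_congr rfl this, Finset.sum_comm]
      refine Finset.sum_congr rfl fun w hw => ?_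
      have hmem : w.prod ∈ (words Sf n).image List.prod := Finset.mem_image_of_mem _ hw
      have : ∀ a ∈ (words Sf n).image List.prod,
          (if w.prod = a then wt μ w * μ (a⁻¹ * g) else 0)
            = if w.prod = a then wt μ w * μ (w.prod⁻¹ * g) else 0 := by
        intro a _
        by_cases h : w.prod = a <;> simp [h]
      rw [Finset.sum_congr rfl this, Finset.sum_ite_eq, if_pos hmem]
    rw [lhs_eq]
    -- now the RHS
    have rhs_eq : ∑ w ∈ words Sf (n + 1), (if w.prod = g then wt μ w else 0)
        = ∑ w ∈ words Sf n, wt μ w * μ (w.prod⁻¹ * g) := by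
      have h1 : ∀ w : List G, (if w.prod = g then wt μ w else 0)
          = wt μ w * (if w.prod = g then (1:ℝ) else 0) := by
        intro w; by_cases h : w.prod = g <;> simp [h]
      rw [Finset.sum_congr rfl fun w _ => h1 w]
      rw [sum_words_split μ n 1 (fun w => if w.prod = g then (1:ℝ) else 0)]
      refine Finset.sum_congr rfl fun u hu => ?_
      rw [words_one, Finset.sum_image (by intro a _ b _ h; simpa using h)]
      have h2 : ∀ s ∈ Sf, wt μ u * wt μ [s] * (if (u ++ [s]).prod = g then (1:ℝ) else 0)
          = if s = u.prod⁻¹ * g then wt μ u * μ s else 0 := by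
        intro s _
        have hc : (u ++ [s]).prod = g ↔ s = u.prod⁻¹ * g := by
          rw [List.prod_append, List.prod_singleton, eq_inv_mul_iff_mul_eq]
        have hw : wt μ [s] = μ s := by simp [wt]
        by_cases h : s = u.prod⁻¹ * g
        · subst h
          rw [if_pos (hc.2 rfl), if_pos rfl, hw, mul_one]
        · rw [if_neg (fun hcc => h (hc.1 hcc)), if_neg h, mul_zero]
      rw [Finset.sum_congr rfl h2, Finset.sum_ite_eq' Sf (u.prod⁻¹ * g) (fun s => wt μ u * μ s)]
      by_cases h : u.prod⁻¹ * g ∈ Sf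
      · rw [if_pos h]
      · rw [if_neg h, hμ0 _ h, mul_zero]
    rw [rhs_eq]


theorem expect_eq' {S : Set G} (hSfin : S.Finite) {μ : G → ℝ}
    (hsupp : Function.support μ ⊆ S) (n : ℕ) (f : G → ℝ) :
    ∑ᶠ g, convPow μ n g * f g
      = ∑ w ∈ words hSfin.toFinset n, wt μ w * f w.prod := by
  set Sf := hSfin.toFinset
  set T := (words Sf n).image List.prod with hT
  have h0 : ∀ a, a ∉ T → convPow μ n a = 0 := by
    intro a ha
    rw [convPow_eq hSfin hsupp]
    apply Finset.sum_eq_zero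
    intro w hw
    rw [if_neg]
    intro h
    exact ha (Finset.mem_image.2 ⟨w, hw, h⟩)
  have hsub : Function.support (fun g => convPow μ n g * f g) ⊆ ↑T := by
    intro a ha
    by_contra h
    exact ha (by simp [h0 a (by simpa using h)])
  rw [finsum_eq_finset_sum_of_support_subset _ hsub]
  have : ∀ g ∈ T, convPow μ n g * f g
      = ∑ w ∈ words Sf n, if w.prod = g then wt μ w * f g else 0 := by
    intro g _
    rw [convPow_eq hSfin hsupp, Finset.sum_mul]
    exact Finset.sum_congr rfl fun w _ => by rw [ite_mul, zero_mul]
  rw [Finset.sum_congr rfl this, Finset.sum_comm]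
  refine Finset.sum_congr rfl fun w hw => ?_
  have hmem : w.prod ∈ T := Finset.mem_image_of_mem _ hw
  have : ∀ g ∈ T, (if w.prod = g then wt μ w * f g else 0)
      = if w.prod = g then wt μ w * f w.prod else 0 := by
    intro g _
    by_cases h : w.prod = g <;> simp [h]
  rw [Finset.sum_congr rfl this, Finset.sum_ite_eq, if_pos hmem]

theorem prob_eq' {S : Set G} (hSfin : S.Finite) {μ : G → ℝ}
    (hsupp : Function.support μ ⊆ S) (n : ℕ) (A : Set G) [DecidablePred (· ∈ A)] :
    ∑ᶠ g ∈ A, convPow μ n g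
      = ∑ w ∈ words hSfin.toFinset n, if w.prod ∈ A then wt μ w else 0 := by
  rw [finsum_mem_def]
  have h1 : ∀ g, A.indicator (convPow μ n) g
      = convPow μ n g * (A.indicator (fun _ => (1:ℝ)) g) := by
    intro g
    by_cases h : g ∈ A <;> simp [Set.indicator_apply, h]
  rw [finsum_congr h1, expect_eq' hSfin hsupp]
  refine Finset.sum_congr rfl fun w _ => ?_
  by_cases h : w.prod ∈ A <;> simp [Set.indicator_apply, h]


section
variable {S : Set G} (hSfin : S.Finite) (hSsym : ∀ s ∈ S, s⁻¹ ∈ S)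
  (hSgen : Subgroup.closure S = ⊤)
  {μ : G → ℝ} (hpos : ∀ g, 0 ≤ μ g) (hsum : ∑ᶠ g, μ g = 1)
  (hsupp : Function.support μ ⊆ S)

include hSfin hSsym hSgen hpos hsum hsupp

/-- Word length of the endpoint of a word of length `n` is at most `n`. -/
theorem wl_path_le {n : ℕ} {w : List G} (hw : w ∈ words hSfin.toFinset n) :
    (wordLength S w.prod : ℝ) ≤ n := by
  rw [mem_words] at hw
  have := wordLength_le (S := S) w (fun x hx => hSfin.mem_toFinset.1 (hw.2 x hx))
  rw [hw.1] at this
  exact_mod_cast this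

/-- decomposition of a word -/
theorem words_decomp {n m : ℕ} {w : List G} (hw : w ∈ words hSfin.toFinset (n + m)) :
    ∃ u v, u ∈ words hSfin.toFinset n ∧ v ∈ words hSfin.toFinset m ∧ w = u ++ v := by
  rw [mem_words] at hw
  refine ⟨w.take n, w.drop n, ?_, ?_, (List.take_append_drop n w).symm⟩
  · rw [mem_words]
    exact ⟨by simp [List.length_take, hw.1], fun x hx => hw.2 x (List.take_subset n w hx)⟩
  · rw [mem_words]
    exact ⟨by simp [List.length_drop, hw.1], fun x hx => hw.2 x (List.drop_subset n w hx)⟩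

/-- mean length over words of length k -/
noncomputable def mk (S : Set G) (hSfin : S.Finite) (μ : G → ℝ) (k : ℕ) : ℝ :=
  ∑ v ∈ words hSfin.toFinset k, wt μ v * (wordLength S v.prod : ℝ)

theorem mk_nonneg (k : ℕ) : 0 ≤ mk S hSfin μ k :=
  Finset.sum_nonneg fun v _ => mul_nonneg (wt_nonneg' hpos v) (Nat.cast_nonneg _)

theorem mk_le (k : ℕ) : mk S hSfin μ k ≤ k := by
  calc mk S hSfin μ k ≤ ∑ v ∈ words hSfin.toFinset k, wt μ v * k := by
        refine Finset.sum_le_sum fun v hv => ?_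
        exact mul_le_mul_of_nonneg_left (wl_path_le hSfin hSsym hSgen hpos hsum hsupp hv) (wt_nonneg' hpos v)
    _ = k := by rw [← Finset.sum_mul, sum_wt_eq_one' hSfin hsum hsupp, one_mul]

/-- The sum of word lengths of the `m` successive blocks of size `k`. -/
noncomputable def blockSum (S : Set G) (k m : ℕ) (w : List G) : ℝ :=
  ∑ j ∈ Finset.range m, (wordLength S (((w.drop (j * k)).take k).prod) : ℝ)

theorem blockSum_append {k m : ℕ} {u : List G} (hu : u.length = m * k) (v : List G) :
    blockSum S k m (u ++ v) = blockSum S k m u := by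
  unfold blockSum
  refine Finset.sum_congr rfl fun j hj => ?_
  have hj' : j < m := Finset.mem_range.1 hj
  have h1 : j * k ≤ u.length := by
    rw [hu]; exact Nat.mul_le_mul_right k (le_of_lt hj')
  have h2 : k ≤ (u.drop (j * k)).length := by
    rw [List.length_drop, hu]
    have h3 : j * k + k ≤ m * k := by
      calc j * k + k = (j + 1) * k := by ring
        _ ≤ m * k := Nat.mul_le_mul_right k hj'
    omega
  rw [List.drop_append_of_le_length h1, List.take_append_of_le_length h2]

theorem blockSum_succ {k m : ℕ} {u : List G} (hu : u.length = m * k) {v : List G}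
    (hv : v.length = k) :
    blockSum S k (m + 1) (u ++ v) = blockSum S k m u + (wordLength S v.prod : ℝ) := by
  unfold blockSum
  rw [Finset.sum_range_succ]
  congr 1
  · exact blockSum_append hSfin hSsym hSgen hpos hsum hsupp (S := S) hu v
  · have h1 : ((u ++ v).drop (m * k)) = v := by
      rw [← hu, List.drop_left]
    rw [h1, List.take_of_length_le hv.le]

theorem wl_le_blockSum {k : ℕ} : ∀ m : ℕ, ∀ w ∈ words hSfin.toFinset (m * k),
    (wordLength S w.prod : ℝ) ≤ blockSum S k m w := by
  intro m
  induction m with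
  | zero =>
    intro w hw
    rw [mem_words] at hw
    have h0 : w = [] := List.length_eq_zero_iff.1 (by simpa using hw.1)
    subst h0
    have := wordLength_le (S := S) [] (by simp)
    simp only [blockSum, Finset.range_zero, Finset.sum_empty]
    exact_mod_cast (by simpa using this)
  | succ m ih =>
    intro w hw
    have hw' : w ∈ words hSfin.toFinset (m * k + k) := by
      rwa [Nat.succ_mul] at hw
    obtain ⟨u, v, hu, hv, rfl⟩ := words_decomp hSfin hSsym hSgen hpos hsum hsupp hw'
    have hul : u.length = m * k := (mem_words.1 hu).1
    have hvl : v.length = k := (mem_words.1 hv).1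
    rw [blockSum_succ hSfin hSsym hSgen hpos hsum hsupp (S := S) hul hvl, List.prod_append]
    have h1 := wordLength_mul_le hSsym hSgen u.prod v.prod
    calc (wordLength S (u.prod * v.prod) : ℝ)
        ≤ (wordLength S u.prod : ℝ) + (wordLength S v.prod : ℝ) := by exact_mod_cast h1
      _ ≤ blockSum S k m u + (wordLength S v.prod : ℝ) := by
          have := ih u hu
          linarith

theorem exp_blockSum {k : ℕ} : ∀ m : ℕ,
    ∑ w ∈ words hSfin.toFinset (m * k), wt μ w * blockSum S k m w
      = m * mk S hSfin μ k := by
  intro m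
  induction m with
  | zero => simp [blockSum]
  | succ m ih =>
    have hsplit := sum_words_split (Sf := hSfin.toFinset) μ (m * k) k (blockSum S k (m + 1))
    rw [show (m + 1) * k = m * k + k from Nat.succ_mul m k, hsplit]
    have expand : ∀ u ∈ words hSfin.toFinset (m * k),
        ∑ v ∈ words hSfin.toFinset k,
          wt μ u * wt μ v * blockSum S k (m + 1) (u ++ v)
        = wt μ u * blockSum S k m u + wt μ u * mk S hSfin μ k := by
      intro u hu
      have step : ∀ v ∈ words hSfin.toFinset k,
          wt μ u * wt μ v * blockSum S k (m + 1) (u ++ v)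
          = (wt μ u * blockSum S k m u) * wt μ v
            + wt μ u * (wt μ v * (wordLength S v.prod : ℝ)) := by
        intro v hv
        rw [blockSum_succ hSfin hSsym hSgen hpos hsum hsupp (S := S) (mem_words.1 hu).1 (mem_words.1 hv).1]
        ring
      rw [Finset.sum_congr rfl step, Finset.sum_add_distrib, ← Finset.mul_sum, ← Finset.mul_sum,
        sum_wt_eq_one' hSfin hsum hsupp, mul_one]
      simp [mk]
    rw [Finset.sum_congr rfl expand, Finset.sum_add_distrib, ih, ← Finset.sum_mul,
      sum_wt_eq_one' hSfin hsum hsupp, one_mul]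
    push_cast
    ring

theorem var_blockSum {k : ℕ} : ∀ m : ℕ,
    ∑ w ∈ words hSfin.toFinset (m * k),
        wt μ w * (blockSum S k m w - m * mk S hSfin μ k) ^ 2
      ≤ m * k ^ 2 := by
  intro m
  induction m with
  | zero => simp [blockSum]
  | succ m ih =>
    have hsplit := sum_words_split (Sf := hSfin.toFinset) μ (m * k) k
      (fun w => (blockSum S k (m + 1) w - ((m : ℝ) + 1) * mk S hSfin μ k) ^ 2)
    rw [show (m + 1) * k = m * k + k from Nat.succ_mul m k]
    push_cast
    rw [hsplit]
    set a := mk S hSfin μ k with ha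
    -- expand the square
    have expand : ∀ u ∈ words hSfin.toFinset (m * k), ∀ v ∈ words hSfin.toFinset k,
        wt μ u * wt μ v * (blockSum S k (m + 1) (u ++ v) - ((m : ℝ) + 1) * a) ^ 2
        = (wt μ u * (blockSum S k m u - m * a) ^ 2) * wt μ v
          + 2 * ((wt μ u * (blockSum S k m u - m * a))
              * (wt μ v * ((wordLength S v.prod : ℝ) - a)))
          + wt μ u * (wt μ v * ((wordLength S v.prod : ℝ) - a) ^ 2) := by
      intro u hu v hv
      rw [blockSum_succ hSfin hSsym hSgen hpos hsum hsupp (S := S) (mem_words.1 hu).1 (mem_words.1 hv).1]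
      push_cast
      ring
    rw [Finset.sum_congr rfl fun u hu => Finset.sum_congr rfl fun v hv => expand u hu v hv]
    -- centered first moments vanish
    have hc1 : ∑ v ∈ words hSfin.toFinset k, wt μ v * ((wordLength S v.prod : ℝ) - a) = 0 := by
      have : ∀ v, wt μ v * ((wordLength S v.prod : ℝ) - a)
          = wt μ v * (wordLength S v.prod : ℝ) - wt μ v * a := fun v => by ring
      rw [Finset.sum_congr rfl fun v _ => this v, Finset.sum_sub_distrib,
        ← Finset.sum_mul, sum_wt_eq_one' hSfin hsum hsupp, one_mul, ha]
      simp [mk]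
    have hc2 : ∑ u ∈ words hSfin.toFinset (m * k),
        wt μ u * (blockSum S k m u - m * a) = 0 := by
      have : ∀ u, wt μ u * (blockSum S k m u - m * a)
          = wt μ u * blockSum S k m u - wt μ u * (m * a) := fun u => by ring
      rw [Finset.sum_congr rfl fun u _ => this u, Finset.sum_sub_distrib,
        ← Finset.sum_mul, sum_wt_eq_one' hSfin hsum hsupp, one_mul, exp_blockSum hSfin hSsym hSgen hpos hsum hsupp m]
      exact sub_self _
    -- the last moment is bounded by k^2
    have hvar : ∑ v ∈ words hSfin.toFinset k,
        wt μ v * ((wordLength S v.prod : ℝ) - a) ^ 2 ≤ k ^ 2 := by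
      calc ∑ v ∈ words hSfin.toFinset k, wt μ v * ((wordLength S v.prod : ℝ) - a) ^ 2
          ≤ ∑ v ∈ words hSfin.toFinset k, wt μ v * k ^ 2 := by
            refine Finset.sum_le_sum fun v hv => ?_
            refine mul_le_mul_of_nonneg_left ?_ (wt_nonneg' hpos v)
            have h1 : (0:ℝ) ≤ (wordLength S v.prod : ℝ) := Nat.cast_nonneg _
            have h2 : (wordLength S v.prod : ℝ) ≤ k := wl_path_le hSfin hSsym hSgen hpos hsum hsupp hv
            have h3 : 0 ≤ a := mk_nonneg hSfin hSsym hSgen hpos hsum hsupp k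
            have h4 : a ≤ k := mk_le hSfin hSsym hSgen hpos hsum hsupp k
            have : |(wordLength S v.prod : ℝ) - a| ≤ k := abs_sub_le_iff.2 ⟨by linarith, by linarith⟩
            calc ((wordLength S v.prod : ℝ) - a) ^ 2 = |(wordLength S v.prod : ℝ) - a| ^ 2 := by
                  rw [sq_abs]
              _ ≤ (k:ℝ) ^ 2 := by
                  exact pow_le_pow_left₀ (abs_nonneg _) this 2
        _ = k ^ 2 := by rw [← Finset.sum_mul, sum_wt_eq_one' hSfin hsum hsupp, one_mul]
    -- now sum the three pieces
    calc ∑ u ∈ words hSfin.toFinset (m * k), ∑ v ∈ words hSfin.toFinset k,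
          ((wt μ u * (blockSum S k m u - m * a) ^ 2) * wt μ v
          + 2 * ((wt μ u * (blockSum S k m u - m * a))
              * (wt μ v * ((wordLength S v.prod : ℝ) - a)))
          + wt μ u * (wt μ v * ((wordLength S v.prod : ℝ) - a) ^ 2))
        = (∑ u ∈ words hSfin.toFinset (m * k), wt μ u * (blockSum S k m u - m * a) ^ 2)
            * (∑ v ∈ words hSfin.toFinset k, wt μ v)
          + 2 * ((∑ u ∈ words hSfin.toFinset (m * k), wt μ u * (blockSum S k m u - m * a))
              * (∑ v ∈ words hSfin.toFinset k, wt μ v * ((wordLength S v.prod : ℝ) - a)))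
          + (∑ u ∈ words hSfin.toFinset (m * k), wt μ u)
            * (∑ v ∈ words hSfin.toFinset k, wt μ v * ((wordLength S v.prod : ℝ) - a) ^ 2) := by
          simp only [Finset.sum_add_distrib, ← Finset.mul_sum, ← Finset.sum_mul]
      _ ≤ m * k ^ 2 * 1 + 2 * 0 + 1 * k ^ 2 := by
          rw [sum_wt_eq_one' hSfin hsum hsupp, sum_wt_eq_one' hSfin hsum hsupp, hc1, hc2]
          have h1 : (∑ u ∈ words hSfin.toFinset (m * k),
              wt μ u * (blockSum S k m u - m * a) ^ 2) * 1 ≤ m * k ^ 2 * 1 := by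
            rw [mul_one, mul_one]; exact ih
          have h2 : (1:ℝ) * (∑ v ∈ words hSfin.toFinset k,
              wt μ v * ((wordLength S v.prod : ℝ) - a) ^ 2) ≤ 1 * k ^ 2 := by
            rw [one_mul, one_mul]; exact hvar
          simp only [mul_zero, zero_mul]
          linarith
      _ = ((m : ℝ) + 1) * k ^ 2 := by push_cast; ring


theorem cheb (k m : ℕ) (t : ℝ) (ht : 0 < t) :
    ∑ w ∈ words hSfin.toFinset (m * k),
        (if (m : ℝ) * mk S hSfin μ k + t ≤ blockSum S k m w then wt μ w else 0)
      ≤ m * k ^ 2 / t ^ 2 := by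
  set a := mk S hSfin μ k
  have step : ∀ w ∈ words hSfin.toFinset (m * k),
      (if (m : ℝ) * a + t ≤ blockSum S k m w then wt μ w else 0)
        ≤ wt μ w * (blockSum S k m w - m * a) ^ 2 / t ^ 2 := by
    intro w hw
    by_cases h : (m : ℝ) * a + t ≤ blockSum S k m w
    · rw [if_pos h]
      have h1 : t ≤ blockSum S k m w - m * a := by linarith
      have h2 : t ^ 2 ≤ (blockSum S k m w - m * a) ^ 2 :=
        pow_le_pow_left₀ (le_of_lt ht) h1 2
      have hw0 := wt_nonneg' hpos w
      have h3 : (1:ℝ) ≤ (blockSum S k m w - ↑m * a) ^ 2 / t ^ 2 :=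
        (one_le_div (by positivity)).2 h2
      calc wt μ w = wt μ w * 1 := (mul_one _).symm
        _ ≤ wt μ w * ((blockSum S k m w - ↑m * a) ^ 2 / t ^ 2) :=
            mul_le_mul_of_nonneg_left h3 hw0
        _ = wt μ w * (blockSum S k m w - ↑m * a) ^ 2 / t ^ 2 := by ring
    · rw [if_neg h]
      exact div_nonneg (mul_nonneg (wt_nonneg' hpos w) (sq_nonneg _)) (sq_nonneg t)
  calc ∑ w ∈ words hSfin.toFinset (m * k),
        (if (m : ℝ) * a + t ≤ blockSum S k m w then wt μ w else 0)
      ≤ ∑ w ∈ words hSfin.toFinset (m * k),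
        wt μ w * (blockSum S k m w - m * a) ^ 2 / t ^ 2 := Finset.sum_le_sum step
    _ = (∑ w ∈ words hSfin.toFinset (m * k),
        wt μ w * (blockSum S k m w - m * a) ^ 2) / t ^ 2 := by
        rw [Finset.sum_div]
    _ ≤ m * k ^ 2 / t ^ 2 := by
        apply div_le_div_of_nonneg_right _ (by positivity)
        · exact var_blockSum hSfin hSsym hSgen hpos hsum hsupp m
        

theorem tail (k m r : ℕ) (t : ℝ) (ht : 0 < t) (c : ℝ)
    (hc : (m : ℝ) * mk S hSfin μ k + r + t ≤ c) :
    ∑ w ∈ words hSfin.toFinset (m * k + r),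
        (if c ≤ (wordLength S w.prod : ℝ) then wt μ w else 0)
      ≤ m * k ^ 2 / t ^ 2 := by
  set a := mk S hSfin μ k
  have h1 : ∀ w : List G, (if c ≤ (wordLength S w.prod : ℝ) then wt μ w else 0)
      = wt μ w * (if c ≤ (wordLength S w.prod : ℝ) then (1:ℝ) else 0) := by
    intro w; by_cases h : c ≤ (wordLength S w.prod : ℝ) <;> simp [h]
  rw [Finset.sum_congr rfl fun w _ => h1 w,
    sum_words_split μ (m * k) r (fun w => if c ≤ (wordLength S w.prod : ℝ) then (1:ℝ) else 0)]
  have key : ∀ u ∈ words hSfin.toFinset (m * k), ∀ v ∈ words hSfin.toFinset r,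
      wt μ u * wt μ v * (if c ≤ (wordLength S ((u ++ v).prod) : ℝ) then (1:ℝ) else 0)
        ≤ wt μ u * wt μ v * (if (m : ℝ) * a + t ≤ blockSum S k m u then (1:ℝ) else 0) := by
    intro u hu v hv
    have hwtu := wt_nonneg' hpos u
    have hwtv := wt_nonneg' hpos v
    by_cases h : c ≤ (wordLength S ((u ++ v).prod) : ℝ)
    · rw [if_pos h]
      have hsub : (wordLength S ((u ++ v).prod) : ℝ)
          ≤ blockSum S k m u + r := by
        rw [List.prod_append]
        have h2 := wordLength_mul_le hSsym hSgen u.prod v.prod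
        have h3 : (wordLength S (u.prod * v.prod) : ℝ)
            ≤ (wordLength S u.prod : ℝ) + (wordLength S v.prod : ℝ) := by exact_mod_cast h2
        have h4 := wl_le_blockSum hSfin hSsym hSgen hpos hsum hsupp m u hu
        have h5 := wl_path_le hSfin hSsym hSgen hpos hsum hsupp hv
        linarith
      have : (m : ℝ) * a + t ≤ blockSum S k m u := by linarith
      rw [if_pos this]
    · rw [if_neg h]
      have : (0:ℝ) ≤ (if (m : ℝ) * a + t ≤ blockSum S k m u then (1:ℝ) else 0) := by
        by_cases h' : (m : ℝ) * a + t ≤ blockSum S k m u <;> simp [h']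
      have := mul_nonneg (mul_nonneg hwtu hwtv) this
      linarith [this]
  calc ∑ u ∈ words hSfin.toFinset (m * k), ∑ v ∈ words hSfin.toFinset r,
        wt μ u * wt μ v * (if c ≤ (wordLength S ((u ++ v).prod) : ℝ) then (1:ℝ) else 0)
      ≤ ∑ u ∈ words hSfin.toFinset (m * k), ∑ v ∈ words hSfin.toFinset r,
        wt μ u * wt μ v * (if (m : ℝ) * a + t ≤ blockSum S k m u then (1:ℝ) else 0) :=
        Finset.sum_le_sum fun u hu => Finset.sum_le_sum fun v hv => key u hu v hv
    _ = ∑ u ∈ words hSfin.toFinset (m * k),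
        (if (m : ℝ) * a + t ≤ blockSum S k m u then wt μ u else 0) := by
        refine Finset.sum_congr rfl fun u hu => ?_
        have hmv : ∀ v, wt μ u * wt μ v
              * (if (m : ℝ) * a + t ≤ blockSum S k m u then (1:ℝ) else 0)
            = (wt μ u * (if (m : ℝ) * a + t ≤ blockSum S k m u then (1:ℝ) else 0)) * wt μ v :=
          fun v => by ring
        rw [Finset.sum_congr rfl fun v _ => hmv v, ← Finset.mul_sum,
          sum_wt_eq_one' hSfin hsum hsupp, mul_one]
        by_cases h : (m : ℝ) * a + t ≤ blockSum S k m u <;> simp [h]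
    _ ≤ m * k ^ 2 / t ^ 2 := cheb hSfin hSsym hSgen hpos hsum hsupp k m t ht


theorem mk_subadd (n m : ℕ) :
    mk S hSfin μ (n + m) ≤ mk S hSfin μ n + mk S hSfin μ m := by
  rw [mk, sum_words_split μ n m (fun w => (wordLength S w.prod : ℝ))]
  calc ∑ u ∈ words hSfin.toFinset n, ∑ v ∈ words hSfin.toFinset m,
        wt μ u * wt μ v * (wordLength S ((u ++ v).prod) : ℝ)
      ≤ ∑ u ∈ words hSfin.toFinset n, ∑ v ∈ words hSfin.toFinset m,
        ((wt μ u * (wordLength S u.prod : ℝ)) * wt μ v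
          + wt μ u * (wt μ v * (wordLength S v.prod : ℝ))) := by
        refine Finset.sum_le_sum fun u hu => Finset.sum_le_sum fun v hv => ?_
        have h1 : (wordLength S ((u ++ v).prod) : ℝ)
            ≤ (wordLength S u.prod : ℝ) + (wordLength S v.prod : ℝ) := by
          rw [List.prod_append]
          exact_mod_cast wordLength_mul_le hSsym hSgen u.prod v.prod
        have h2 := mul_nonneg (wt_nonneg' hpos u) (wt_nonneg' hpos v)
        calc wt μ u * wt μ v * (wordLength S ((u ++ v).prod) : ℝ)
            ≤ wt μ u * wt μ v * ((wordLength S u.prod : ℝ) + (wordLength S v.prod : ℝ)) :=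
              mul_le_mul_of_nonneg_left h1 h2
          _ = (wt μ u * (wordLength S u.prod : ℝ)) * wt μ v
              + wt μ u * (wt μ v * (wordLength S v.prod : ℝ)) := by ring
    _ = mk S hSfin μ n + mk S hSfin μ m := by
        simp only [Finset.sum_add_distrib, ← Finset.mul_sum, ← Finset.sum_mul]
        rw [sum_wt_eq_one' hSfin hsum hsupp, sum_wt_eq_one' hSfin hsum hsupp]
        simp [mk, Finset.mul_sum]

theorem fekete_facts (L : ℝ)
    (hL' : Tendsto (fun n : ℕ => mk S hSfin μ n / n) atTop (nhds L)) :
    (∀ n : ℕ, L * n ≤ mk S hSfin μ n)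
      ∧ (∀ δ > (0:ℝ), ∃ k : ℕ, k ≠ 0 ∧ mk S hSfin μ k < (L + δ) * k) := by
  have hsub : Subadditive (fun n => mk S hSfin μ n) := fun n m =>
    mk_subadd hSfin hSsym hSgen hpos hsum hsupp n m
  have hbdd : BddBelow (Set.range fun n : ℕ => mk S hSfin μ n / n) := by
    refine ⟨0, ?_⟩
    rintro x ⟨n, rfl⟩
    exact div_nonneg (mk_nonneg hSfin hSsym hSgen hpos hsum hsupp n) (Nat.cast_nonneg n)
  have hlim := hsub.tendsto_lim hbdd
  have hLeq : L = hsub.lim := tendsto_nhds_unique hL' hlim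
  constructor
  · intro n
    rcases Nat.eq_zero_or_pos n with h | h
    · subst h
      simpa using mk_nonneg hSfin hSsym hSgen hpos hsum hsupp 0
    · have h1 := hsub.lim_le_div hbdd (Nat.pos_iff_ne_zero.1 h)
      rw [← hLeq] at h1
      have hn0 : (0:ℝ) < n := by exact_mod_cast h
      calc L * n ≤ (mk S hSfin μ n / n) * n := by
            exact mul_le_mul_of_nonneg_right h1 (le_of_lt hn0)
        _ = mk S hSfin μ n := by field_simp
  · intro δ hδ
    by_contra hcon
    push_neg at hcon
    have hlb : L + δ ≤ hsub.lim := by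
      rw [Subadditive.lim]
      refine le_csInf ⟨(fun n : ℕ => mk S hSfin μ n / n) 1, ⟨1, by norm_num, rfl⟩⟩ ?_
      rintro b ⟨n, hn, rfl⟩
      have hn0 : n ≠ 0 := by
        intro h; rw [h] at hn; exact absurd hn (by norm_num)
      have hnpos : (0:ℝ) < n := by
        have : 0 < n := Nat.pos_of_ne_zero hn0
        exact_mod_cast this
      rw [le_div_iff₀ hnpos]
      exact hcon n hn0
    rw [← hLeq] at hlb
    linarith

theorem upper_tail (L : ℝ) (hLpos : 0 < L)
    (hL' : Tendsto (fun n : ℕ => mk S hSfin μ n / n) atTop (nhds L))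
    (η ρ : ℝ) (hη : 0 < η) (hρ : 0 < ρ) :
    ∃ N : ℕ, ∀ n ≥ N,
      ∑ w ∈ words hSfin.toFinset n,
          (if (1 + η) * L * n < (wordLength S w.prod : ℝ) then wt μ w else 0) ≤ ρ := by
  obtain ⟨k, hk0, hak⟩ :=
    (fekete_facts hSfin hSsym hSgen hpos hsum hsupp L hL').2 (η * L / 2) (by positivity)
  have hkpos : (0:ℝ) < k := by exact_mod_cast Nat.pos_of_ne_zero hk0
  refine ⟨max (⌈(4 * k) / (η * L)⌉₊ + 1) (⌈(16 * k) / (η ^ 2 * L ^ 2 * ρ)⌉₊ + 1),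
    fun n hn => ?_⟩
  have hnpos : 0 < n := lt_of_lt_of_le (Nat.lt_of_lt_of_le (Nat.zero_lt_succ _)
    (le_max_left _ _)) hn
  have hnR : (0:ℝ) < n := by exact_mod_cast hnpos
  have hn1 : (4 * k) / (η * L) ≤ n := by
    calc (4 * (k:ℝ)) / (η * L) ≤ ⌈(4 * (k:ℝ)) / (η * L)⌉₊ := Nat.le_ceil _
      _ ≤ n := by exact_mod_cast le_trans (le_trans (Nat.le_succ _) (le_max_left _ _)) hn
  have hn2 : (16 * k) / (η ^ 2 * L ^ 2 * ρ) ≤ n := by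
    calc (16 * (k:ℝ)) / (η ^ 2 * L ^ 2 * ρ) ≤ ⌈(16 * (k:ℝ)) / (η ^ 2 * L ^ 2 * ρ)⌉₊ :=
          Nat.le_ceil _
      _ ≤ n := by exact_mod_cast le_trans (le_trans (Nat.le_succ _) (le_max_right _ _)) hn
  set m := n / k with hm
  set r := n % k with hr
  have hmkr : m * k + r = n := by
    rw [hm, hr, mul_comm]
    exact Nat.div_add_mod n k
  have hrk : (r : ℝ) ≤ k := by
    have : r < k := Nat.mod_lt n (Nat.pos_of_ne_zero hk0)
    exact_mod_cast le_of_lt this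
  have hmk_le : (m : ℝ) * k ≤ n := by
    have : m * k ≤ n := by rw [hm]; exact Nat.div_mul_le_self n k
    exact_mod_cast this
  have h4k : 4 * (k:ℝ) ≤ η * L * n := by
    rw [div_le_iff₀ (by positivity)] at hn1
    nlinarith
  have h16k : 16 * (k:ℝ) ≤ η ^ 2 * L ^ 2 * ρ * n := by
    rw [div_le_iff₀ (by positivity)] at hn2
    nlinarith
  set t : ℝ := η * L * n / 4 with htdef
  have ht : 0 < t := by positivity
  have hmknn : 0 ≤ mk S hSfin μ k := mk_nonneg hSfin hSsym hSgen hpos hsum hsupp k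
  have hc : (m : ℝ) * mk S hSfin μ k + r + t ≤ (1 + η) * L * n := by
    have h1 : (m : ℝ) * mk S hSfin μ k ≤ (m : ℝ) * ((L + η * L / 2) * k) :=
      mul_le_mul_of_nonneg_left (le_of_lt hak) (Nat.cast_nonneg m)
    have h2 : (m : ℝ) * ((L + η * L / 2) * k) = ((m:ℝ) * k) * (L + η * L / 2) := by ring
    have h3 : ((m:ℝ) * k) * (L + η * L / 2) ≤ n * (L + η * L / 2) := by
      apply mul_le_mul_of_nonneg_right hmk_le
      positivity
    have h5 : (r:ℝ) ≤ η * L * n / 4 := by linarith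
    rw [htdef]
    nlinarith
  have hbound : (m:ℝ) * k ^ 2 / t ^ 2 ≤ ρ := by
    rw [div_le_iff₀ (by positivity)]
    have ha : (m:ℝ) * k * k ≤ n * k := mul_le_mul_of_nonneg_right hmk_le (le_of_lt hkpos)
    have hb : 16 * (k:ℝ) * n ≤ η ^ 2 * L ^ 2 * ρ * n * n :=
      mul_le_mul_of_nonneg_right h16k (le_of_lt hnR)
    rw [htdef]
    nlinarith
  have hmono : ∀ w ∈ words hSfin.toFinset n,
      (if (1 + η) * L * n < (wordLength S w.prod : ℝ) then wt μ w else 0)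
        ≤ (if (1 + η) * L * n ≤ (wordLength S w.prod : ℝ) then wt μ w else 0) := by
    intro w hw
    by_cases h : (1 + η) * L * n < (wordLength S w.prod : ℝ)
    · rw [if_pos h, if_pos (le_of_lt h)]
    · rw [if_neg h]
      by_cases h' : (1 + η) * L * n ≤ (wordLength S w.prod : ℝ)
      · rw [if_pos h']; exact wt_nonneg' hpos w
      · rw [if_neg h']
  have htail := tail hSfin hSsym hSgen hpos hsum hsupp k m r t ht ((1 + η) * L * n) hc
  rw [hmkr] at htail
  calc ∑ w ∈ words hSfin.toFinset n,
        (if (1 + η) * L * n < (wordLength S w.prod : ℝ) then wt μ w else 0)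
      ≤ ∑ w ∈ words hSfin.toFinset n,
        (if (1 + η) * L * n ≤ (wordLength S w.prod : ℝ) then wt μ w else 0) :=
        Finset.sum_le_sum hmono
    _ ≤ (m:ℝ) * k ^ 2 / t ^ 2 := htail
    _ ≤ ρ := hbound


end
end Dec
end LLNAux

open LLNAux in
/-- Law of Large Numbers for word lengths: if the drift `L` is not zero, then for every
`ε > 0` there is `N` with `μ^{*n}({g : |l_S(g)/(L·n) − 1| ≤ ε}) ≥ 1 − ε` for all `n ≥ N`. -/
theorem lln_word_lengths {G : Type*} [Group G] (S : Set G)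
    (hSfin : S.Finite) (hSsym : ∀ s ∈ S, s⁻¹ ∈ S) (hSone : (1 : G) ∉ S)
    (hSgen : Subgroup.closure S = ⊤)
    (μ : G → ℝ) (hpos : ∀ g, 0 ≤ μ g) (hsum : ∑ᶠ g, μ g = 1)
    (hsupp : Function.support μ ⊆ S)
    (L : ℝ)
    (hL : Tendsto (fun n : ℕ => meanLength S μ n / (n : ℝ)) atTop (nhds L))
    (hL0 : L ≠ 0) :
    ∀ ε > (0 : ℝ), ∃ N : ℕ, ∀ n ≥ N,
      1 - ε ≤ ∑ᶠ g ∈ {g : G | |(wordLength S g : ℝ) / (L * (n : ℝ)) - 1| ≤ ε},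
        convPow μ n g := by
  classical
  -- meanLength equals the word-sum mean
  have hmean : ∀ n : ℕ, meanLength S μ n = mk S hSfin μ n := fun n =>
    expect_eq' hSfin hsupp n (fun g => (wordLength S g : ℝ))
  have hL' : Tendsto (fun n : ℕ => mk S hSfin μ n / n) atTop (nhds L) := by
    refine hL.congr fun n => by rw [hmean]
  have hLnonneg : 0 ≤ L := by
    refine ge_of_tendsto' hL' fun n => ?_
    exact div_nonneg (mk_nonneg hSfin hSsym hSgen hpos hsum hsupp n) (Nat.cast_nonneg n)
  have hLpos : 0 < L := lt_of_le_of_ne hLnonneg (Ne.symm hL0)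
  intro ε hε
  set η : ℝ := ε ^ 2 / 4 with hηdef
  have hη : 0 < η := by positivity
  obtain ⟨N1, hN1⟩ := upper_tail hSfin hSsym hSgen hpos hsum hsupp L hLpos hL'
    η (ε ^ 2 * L / 4) hη (by positivity)
  obtain ⟨N2, hN2⟩ := upper_tail hSfin hSsym hSgen hpos hsum hsupp L hLpos hL'
    ε (ε / 2) hε (by positivity)
  refine ⟨max (max N1 N2) 1, fun n hn => ?_⟩
  have hn1 : n ≥ N1 := le_trans (le_trans (le_max_left _ _) (le_max_left _ _)) hn
  have hn2 : n ≥ N2 := le_trans (le_trans (le_max_right _ _) (le_max_left _ _)) hn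
  have hnpos : 0 < n := lt_of_lt_of_le Nat.zero_lt_one (le_trans (le_max_right _ _) hn)
  have hnR : (0:ℝ) < n := by exact_mod_cast hnpos
  have hLn : 0 < L * (n:ℝ) := mul_pos hLpos hnR
  set Sf := hSfin.toFinset
  -- the three probabilities
  set pA : ℝ := ∑ w ∈ words Sf n, (if (wordLength S w.prod : ℝ) < (1 - ε) * L * n then wt μ w else 0) with hpAdef
  set pC : ℝ := ∑ w ∈ words Sf n, (if (1 + η) * L * n < (wordLength S w.prod : ℝ) then wt μ w else 0) with hpCdef
  set pCε : ℝ := ∑ w ∈ words Sf n, (if (1 + ε) * L * n < (wordLength S w.prod : ℝ) then wt μ w else 0) with hpCEdef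
  have hpC : pC ≤ ε ^ 2 * L / 4 := hN1 n hn1
  have hpCε : pCε ≤ ε / 2 := hN2 n hn2
  have hpA0 : 0 ≤ pA := Finset.sum_nonneg fun w _ => by
    by_cases h : (wordLength S w.prod : ℝ) < (1 - ε) * L * n
    · rw [if_pos h]; exact wt_nonneg' hpos w
    · rw [if_neg h]
  have hpC0 : 0 ≤ pC := Finset.sum_nonneg fun w _ => by
    by_cases h : (1 + η) * L * n < (wordLength S w.prod : ℝ)
    · rw [if_pos h]; exact wt_nonneg' hpos w
    · rw [if_neg h]
  have hpCε0 : 0 ≤ pCε := Finset.sum_nonneg fun w _ => by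
    by_cases h : (1 + ε) * L * n < (wordLength S w.prod : ℝ)
    · rw [if_pos h]; exact wt_nonneg' hpos w
    · rw [if_neg h]
  -- lower-tail bound : pA ≤ ε / 2
  have hpA : pA ≤ ε / 2 := by
    set pB : ℝ := ∑ w ∈ words Sf n,
      (if ¬ ((wordLength S w.prod : ℝ) < (1 - ε) * L * n) ∧ ¬ ((1 + η) * L * n < (wordLength S w.prod : ℝ)) then wt μ w else 0) with hpBdef
    set pC' : ℝ := ∑ w ∈ words Sf n,
      (if ¬ ((wordLength S w.prod : ℝ) < (1 - ε) * L * n) ∧ (1 + η) * L * n < (wordLength S w.prod : ℝ) then wt μ w else 0) with hpC'def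
    have hpart : pA + pC' + pB = 1 := by
      have hterm : ∀ w ∈ words Sf n,
          ((if (wordLength S w.prod : ℝ) < (1 - ε) * L * n then wt μ w else 0)
            + (if ¬ ((wordLength S w.prod : ℝ) < (1 - ε) * L * n) ∧ (1 + η) * L * n < (wordLength S w.prod : ℝ) then wt μ w else 0))
            + (if ¬ ((wordLength S w.prod : ℝ) < (1 - ε) * L * n) ∧ ¬ ((1 + η) * L * n < (wordLength S w.prod : ℝ)) then wt μ w else 0)
          = wt μ w := by
        intro w _
        by_cases h1 : (wordLength S w.prod : ℝ) < (1 - ε) * L * n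
        · simp [h1]
        · by_cases h2 : (1 + η) * L * n < (wordLength S w.prod : ℝ) <;> simp [h1, h2]
      rw [hpAdef, hpC'def, hpBdef, ← Finset.sum_add_distrib, ← Finset.sum_add_distrib,
        Finset.sum_congr rfl hterm, sum_wt_eq_one' hSfin hsum hsupp n]
    have hpC'le : pC' ≤ pC := by
      rw [hpC'def, hpCdef]
      refine Finset.sum_le_sum fun w _ => ?_
      by_cases h : ¬ ((wordLength S w.prod : ℝ) < (1 - ε) * L * n) ∧ (1 + η) * L * n < (wordLength S w.prod : ℝ)
      · rw [if_pos h, if_pos h.2]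
      · rw [if_neg h]
        by_cases h2 : (1 + η) * L * n < (wordLength S w.prod : ℝ)
        · rw [if_pos h2]; exact wt_nonneg' hpos w
        · rw [if_neg h2]
    have hpB0 : 0 ≤ pB := Finset.sum_nonneg fun w _ => by
      by_cases h : ¬ ((wordLength S w.prod : ℝ) < (1 - ε) * L * n) ∧ ¬ ((1 + η) * L * n < (wordLength S w.prod : ℝ))
      · rw [if_pos h]; exact wt_nonneg' hpos w
      · rw [if_neg h]
    -- main expectation bound
    have hmain : L * n ≤ (1 - ε) * L * n * pA + (n:ℝ) * pC' + (1 + η) * L * n * pB := by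
      have h1 : L * n ≤ mk S hSfin μ n :=
        (fekete_facts hSfin hSsym hSgen hpos hsum hsupp L hL').1 n
      have h2 : mk S hSfin μ n ≤ (1 - ε) * L * n * pA + (n:ℝ) * pC' + (1 + η) * L * n * pB := by
        simp only [LLNAux.mk]
        rw [hpAdef, hpC'def, hpBdef, Finset.mul_sum, Finset.mul_sum, Finset.mul_sum,
          ← Finset.sum_add_distrib, ← Finset.sum_add_distrib]
        refine Finset.sum_le_sum fun w hw => ?_
        have hwt := wt_nonneg' hpos w
        have hwn := wl_path_le hSfin hSsym hSgen hpos hsum hsupp hw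
        by_cases h1 : (wordLength S w.prod : ℝ) < (1 - ε) * L * n
        · have hA : wt μ w * (wordLength S w.prod : ℝ) ≤ (1 - ε) * L * n * wt μ w := by
            have : wt μ w * (wordLength S w.prod : ℝ) ≤ wt μ w * ((1 - ε) * L * n) :=
              mul_le_mul_of_nonneg_left (le_of_lt h1) hwt
            linarith
          simp only [if_pos h1, if_neg (show ¬ (¬ ((wordLength S w.prod : ℝ) < (1 - ε) * L * n) ∧ (1 + η) * L * n < (wordLength S w.prod : ℝ))
            from fun h => h.1 h1), if_neg (show ¬ (¬ ((wordLength S w.prod : ℝ) < (1 - ε) * L * n)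
              ∧ ¬ ((1 + η) * L * n < (wordLength S w.prod : ℝ))) from fun h => h.1 h1), mul_zero, add_zero]
          exact hA
        · by_cases h2 : (1 + η) * L * n < (wordLength S w.prod : ℝ)
          · have hC : wt μ w * (wordLength S w.prod : ℝ) ≤ (n:ℝ) * wt μ w := by
              have : wt μ w * (wordLength S w.prod : ℝ) ≤ wt μ w * n :=
                mul_le_mul_of_nonneg_left hwn hwt
              linarith
            simp only [if_neg h1, if_pos (And.intro h1 h2),
              if_neg (show ¬ (¬ ((wordLength S w.prod : ℝ) < (1 - ε) * L * n) ∧ ¬ ((1 + η) * L * n < (wordLength S w.prod : ℝ)))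
                from fun h => h.2 h2), mul_zero, add_zero, zero_add]
            exact hC
          · have hB : wt μ w * (wordLength S w.prod : ℝ) ≤ (1 + η) * L * n * wt μ w := by
              have hle : (wordLength S w.prod : ℝ) ≤ (1 + η) * L * n := le_of_not_gt h2
              have : wt μ w * (wordLength S w.prod : ℝ) ≤ wt μ w * ((1 + η) * L * n) :=
                mul_le_mul_of_nonneg_left hle hwt
              linarith
            simp only [if_neg h1, if_neg (show ¬ (¬ ((wordLength S w.prod : ℝ) < (1 - ε) * L * n)
              ∧ (1 + η) * L * n < (wordLength S w.prod : ℝ)) from fun h => h2 h.2),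
              if_pos (And.intro h1 h2), mul_zero, zero_add]
            exact hB
      linarith
    -- conclude pA ≤ ε/2
    have hfin : (ε * L * (n:ℝ)) * pA ≤ (ε * L * (n:ℝ)) * (ε / 2) := by
      have hB_eq : pB = 1 - pA - pC' := by linarith
      rw [hB_eq] at hmain
      have hpC'2 : pC' ≤ ε ^ 2 * L / 4 := le_trans hpC'le hpC
      have hpC'0 : 0 ≤ pC' := by
        refine Finset.sum_nonneg fun w _ => ?_
        by_cases h : ¬ ((wordLength S w.prod : ℝ) < (1 - ε) * L * n) ∧ (1 + η) * L * n < (wordLength S w.prod : ℝ)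
        · rw [if_pos h]; exact wt_nonneg' hpos w
        · rw [if_neg h]
      rw [hηdef] at hmain
      have t1 : (n:ℝ) * pC' ≤ (n:ℝ) * (ε ^ 2 * L / 4) :=
        mul_le_mul_of_nonneg_left hpC'2 (le_of_lt hnR)
      have t2 : (0:ℝ) ≤ (ε ^ 2 / 4) * L * (n:ℝ) * pA :=
        mul_nonneg (mul_nonneg (mul_nonneg (by positivity) hLnonneg) (le_of_lt hnR)) hpA0
      have t3 : (0:ℝ) ≤ (1 + ε ^ 2 / 4) * L * (n:ℝ) * pC' :=
        mul_nonneg (mul_nonneg (mul_nonneg (by positivity) hLnonneg) (le_of_lt hnR)) hpC'0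
      nlinarith [t1, t2, t3]
    exact le_of_mul_le_mul_left hfin (by positivity)
  -- final assembly
  rw [prob_eq' hSfin hsupp n {g : G | |(wordLength S g : ℝ) / (L * (n : ℝ)) - 1| ≤ ε}]
  set good : List G → Prop := fun w => (1 - ε) * L * n ≤ (wordLength S w.prod : ℝ) ∧ (wordLength S w.prod : ℝ) ≤ (1 + ε) * L * n with hgooddef
  set Sgood : ℝ := ∑ w ∈ words Sf n, (if good w then wt μ w else 0) with hSgooddef
  have hgood_mem : ∀ w ∈ words Sf n, good w →
      w.prod ∈ {g : G | |(wordLength S g : ℝ) / (L * (n : ℝ)) - 1| ≤ ε} := by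
    intro w _ hg
    simp only [Set.mem_setOf_eq]
    rw [abs_sub_le_iff]
    constructor
    · rw [sub_le_iff_le_add, div_le_iff₀ hLn]
      have := hg.2
      nlinarith
    · rw [sub_le_iff_le_add, ← sub_le_iff_le_add', le_div_iff₀ hLn]
      have := hg.1
      nlinarith
  have hstep1 : Sgood ≤ ∑ w ∈ words Sf n,
      (if w.prod ∈ {g : G | |(wordLength S g : ℝ) / (L * (n : ℝ)) - 1| ≤ ε}
        then wt μ w else 0) := by
    rw [hSgooddef]
    refine Finset.sum_le_sum fun w hw => ?_
    by_cases h : good w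
    · rw [if_pos h, if_pos (hgood_mem w hw h)]
    · rw [if_neg h]
      by_cases h2 : w.prod ∈ {g : G | |(wordLength S g : ℝ) / (L * (n : ℝ)) - 1| ≤ ε}
      · rw [if_pos h2]; exact wt_nonneg' hpos w
      · rw [if_neg h2]
  have hstep2 : 1 - (pA + pCε) ≤ Sgood := by
    have hpart : Sgood + ∑ w ∈ words Sf n, (if ¬ good w then wt μ w else 0) = 1 := by
      have hterm : ∀ w ∈ words Sf n,
          (if good w then wt μ w else 0) + (if ¬ good w then wt μ w else 0) = wt μ w := by
        intro w _
        by_cases h : good w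
        · rw [if_pos h, if_neg (not_not_intro h), add_zero]
        · rw [if_neg h, if_pos h, zero_add]
      rw [hSgooddef, ← Finset.sum_add_distrib, Finset.sum_congr rfl hterm,
        sum_wt_eq_one' hSfin hsum hsupp n]
    have hbad : ∑ w ∈ words Sf n, (if ¬ good w then wt μ w else 0) ≤ pA + pCε := by
      rw [hpAdef, hpCEdef, ← Finset.sum_add_distrib]
      refine Finset.sum_le_sum fun w _ => ?_
      have hwt := wt_nonneg' hpos w
      by_cases h : good w
      · rw [if_neg (not_not_intro h)]
        by_cases h1 : (wordLength S w.prod : ℝ) < (1 - ε) * L * n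
        · exact absurd h1 (not_lt.2 h.1)
        · rw [if_neg h1]
          by_cases h2 : (1 + ε) * L * n < (wordLength S w.prod : ℝ)
          · exact absurd h2 (not_lt.2 h.2)
          · rw [if_neg h2]; norm_num
      · rw [if_pos h]
        rw [hgooddef] at h
        simp only [not_and_or, not_le] at h
        rcases h with h1 | h2
        · rw [if_pos h1]
          by_cases h2 : (1 + ε) * L * n < (wordLength S w.prod : ℝ)
          · rw [if_pos h2]; linarith
          · rw [if_neg h2]; linarith
        · rw [if_pos h2]
          by_cases h1 : (wordLength S w.prod : ℝ) < (1 - ε) * L * n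
          · rw [if_pos h1]; linarith
          · rw [if_neg h1]; linarith
    linarith
  calc (1:ℝ) - ε ≤ 1 - (pA + pCε) := by linarith
    _ ≤ Sgood := hstep2
    _ ≤ _ := hstep1
end

section
/- (Fundamental inequality.) Let G be a countable group generated by a finite symmetric set S, and let μ be a symmetric probability measure (μ({g}) = μ({g⁻¹})) whose support is S. Let v = lim_n (log |W_n|)/n be the logarithmic volume of G in the generators S, let h = h(G, μ) = lim_n H(μ^{*n})/n be the entropy of (G, μ), and let l = l(μ) = lim_n E_{μ^{*n}}[l_S]/n be the drift. Then h ≤ l · v. -/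
open Filter

/-- The sphere of radius `n`: elements of word length exactly `n`. -/
def wordSphere {G : Type*} [Group G] (S : Set G) (n : ℕ) : Set G :=
  {g | wordLength S g = n}

/-- Shannon entropy `H(ν) = −Σ_g ν(g) log ν(g)` (natural logarithm, `0 log 0 = 0`). -/
noncomputable def shannonEntropy {G : Type*} (ν : G → ℝ) : ℝ :=
  -∑ᶠ g, ν g * Real.log (ν g)

/-!
The law `μ^{*n}` is carried by the ball of radius `n`. Grouping its atoms by word length, its
entropy is at most the entropy of the length distribution, which is `≤ log (n + 1)` because the
length takes only `n + 1` values, plus the `μ^{*n}`-average of `log |W_k|`. For `c > v` we have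
`log |W_k| ≤ C + c k` for all `k`, so `H(μ^{*n}) ≤ log (n + 1) + C + c · E_{μ^{*n}}[l_S]`.
Dividing by `n` gives `h ≤ c l`, and letting `c ↓ v` gives `h ≤ l v`.
-/

open Function Pointwise Real Finset

section Monoid

variable {M : Type*} [Monoid M] {s : Set M}

lemma Set.Finite.pow (hs : s.Finite) (n : ℕ) : (s ^ n).Finite := by
  induction n with
  | zero => simp
  | succ n ih => rw [pow_succ]; exact ih.mul hs

lemma Set.list_prod_mem_pow {w : List M} (hw : ∀ x ∈ w, x ∈ s) : w.prod ∈ s ^ w.length := by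
  induction w with
  | nil => simp
  | cons a w ih =>
    rw [List.prod_cons, List.length_cons, pow_succ']
    exact Set.mul_mem_mul (hw a List.mem_cons_self)
      (ih fun x hx => hw x (List.mem_cons_of_mem a hx))

end Monoid

section WordLength

variable {G : Type*} [Group G] {S : Set G}

lemma wordLength_le_of_mem_pow {n : ℕ} {g : G} (hg : g ∈ S ^ n) : wordLength S g ≤ n := by
  obtain ⟨f, rfl⟩ := Set.mem_pow.1 hg
  exact Nat.sInf_le ⟨_, by simp [List.mem_ofFn], List.length_ofFn, rfl⟩

lemma mem_pow_wordLength (hSsym : ∀ s ∈ S, s⁻¹ ∈ S) (hSgen : Subgroup.closure S = ⊤) (g : G) :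
    g ∈ S ^ wordLength S g := by
  have hS : S ∪ S⁻¹ = S := Set.union_eq_self_of_subset_right fun x hx => by
    simpa using hSsym x⁻¹ hx
  have hg : g ∈ Submonoid.closure S := by
    rw [← hS, ← Subgroup.closure_toSubmonoid, hSgen]
    trivial
  obtain ⟨w, hw, rfl⟩ := Submonoid.exists_list_of_mem_closure hg
  obtain ⟨w', hw', hlen, hprod⟩ := Nat.sInf_mem (⟨w.length, w, hw, rfl, rfl⟩ :
    {n | ∃ w' : List G, (∀ x ∈ w', x ∈ S) ∧ w'.length = n ∧ w'.prod = w.prod}.Nonempty)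
  rw [wordLength, ← hlen, ← hprod]
  exact Set.list_prod_mem_pow hw'

lemma wordSphere_finite (hS : S.Finite) (hSsym : ∀ s ∈ S, s⁻¹ ∈ S)
    (hSgen : Subgroup.closure S = ⊤) (n : ℕ) : (wordSphere S n).Finite :=
  (hS.pow n).subset fun g hg => hg ▸ mem_pow_wordLength hSsym hSgen g

end WordLength

section Convolution

variable {G : Type*} [Group G]

lemma finsum_convMeas {ν₁ ν₂ : G → ℝ} (h₁ : (support ν₁).Finite) (h₂ : (support ν₂).Finite) :
    ∑ᶠ g, convMeas ν₁ ν₂ g = (∑ᶠ a, ν₁ a) * ∑ᶠ b, ν₂ b := by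
  set A := h₁.toFinset
  have hν₁ : support ν₁ ⊆ A := h₁.coe_toFinset.ge
  have hA (f : G → ℝ) : (support fun a => ν₁ a * f a) ⊆ A :=
    (support_mul_subset_left ν₁ f).trans hν₁
  have hshift (a : G) : ∑ᶠ g, ν₂ (a⁻¹ * g) = ∑ᶠ b, ν₂ b :=
    finsum_comp_equiv (Equiv.mulLeft a⁻¹)
  have hfin (a : G) : HasFiniteSupport fun g => ν₁ a * ν₂ (a⁻¹ * g) := by
    refine (h₂.image (a * ·)).subset fun g hg => ⟨a⁻¹ * g, ?_, mul_inv_cancel_left a g⟩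
    exact support_mul_subset_right (fun _ => ν₁ a) (fun g => ν₂ (a⁻¹ * g)) hg
  calc ∑ᶠ g, convMeas ν₁ ν₂ g = ∑ᶠ g, ∑ a ∈ A, ν₁ a * ν₂ (a⁻¹ * g) :=
        finsum_congr fun g => finsum_eq_finsetSum_of_support_subset _ (hA _)
    _ = ∑ a ∈ A, ∑ᶠ g, ν₁ a * ν₂ (a⁻¹ * g) := finsum_sum_comm _ _ fun a _ => hfin a
    _ = ∑ a ∈ A, ν₁ a * ∑ᶠ b, ν₂ b := by simp only [← mul_finsum, hshift]
    _ = (∑ᶠ a, ν₁ a) * ∑ᶠ b, ν₂ b := by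
        rw [← sum_mul, finsum_eq_finsetSum_of_support_subset _ hν₁]

variable {μ : G → ℝ}

lemma convPow_nonneg (hμ : ∀ g, 0 ≤ μ g) (n : ℕ) (g : G) : 0 ≤ convPow μ n g := by
  induction n generalizing g with
  | zero => exact Set.indicator_nonneg (fun _ _ => zero_le_one) g
  | succ n ih => exact finsum_nonneg fun a => mul_nonneg (ih a) (hμ _)

lemma support_convPow_subset {S : Set G} (hμ : support μ ⊆ S) (n : ℕ) :
    support (convPow μ n) ⊆ S ^ n := by
  induction n with
  | zero => rw [pow_zero, convPow]; exact Set.support_indicator_subset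
  | succ n ih =>
    intro g hg
    obtain ⟨a, ha⟩ : ∃ a, convPow μ n a * μ (a⁻¹ * g) ≠ 0 := by
      by_contra! h
      exact hg (finsum_eq_zero_of_forall_eq_zero h)
    rw [pow_succ, ← mul_inv_cancel_left a g]
    exact Set.mul_mem_mul (ih (left_ne_zero_of_mul ha)) (hμ (right_ne_zero_of_mul ha))

lemma finsum_convPow (hμ : (support μ).Finite) (hsum : ∑ᶠ g, μ g = 1) (n : ℕ) :
    ∑ᶠ g, convPow μ n g = 1 := by
  induction n with
  | zero => rw [convPow, ← finsum_mem_def]; simp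
  | succ n ih =>
    rw [convPow, finsum_convMeas ((hμ.pow n).subset (support_convPow_subset subset_rfl n)) hμ,
      ih, hsum, one_mul]

end Convolution

section Entropy

variable {α β : Type*}

lemma Finset.sum_negMulLog_le (B : Finset α) {q : α → ℝ} (hq : ∀ a ∈ B, 0 ≤ q a) :
    ∑ a ∈ B, negMulLog (q a) ≤ negMulLog (∑ a ∈ B, q a) + (∑ a ∈ B, q a) * log #B := by
  rcases B.eq_empty_or_nonempty with rfl | hB
  · simp
  have hcard : (0 : ℝ) < #B := by exact_mod_cast hB.card_pos
  have hw : ∑ _a ∈ B, (#B : ℝ)⁻¹ = 1 := by simp [hcard.ne']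
  have hJ := concaveOn_negMulLog.le_map_sum (fun _ _ => inv_nonneg.2 hcard.le) hw hq
  simp only [smul_eq_mul, ← mul_sum] at hJ
  rw [mul_comm, negMulLog_mul, negMulLog, log_inv] at hJ
  have := mul_le_mul_of_nonneg_left hJ hcard.le
  field_simp at this
  linarith

lemma Finset.sum_negMulLog_le_log_card (B : Finset α) {q : α → ℝ} (hq : ∀ a ∈ B, 0 ≤ q a)
    (h1 : ∑ a ∈ B, q a = 1) : ∑ a ∈ B, negMulLog (q a) ≤ log #B := by
  simpa [h1] using B.sum_negMulLog_le hq

lemma Finset.sum_negMulLog_le_fiberwise [DecidableEq β] {A : Finset α} {T : Finset β}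
    {f : α → β} (hf : ∀ a ∈ A, f a ∈ T) {q : α → ℝ} (hq : ∀ a ∈ A, 0 ≤ q a) :
    ∑ a ∈ A, negMulLog (q a) ≤
      ∑ b ∈ T, negMulLog (∑ a ∈ A with f a = b, q a) + ∑ a ∈ A, q a * log #{x ∈ A | f x = f a} := by
  rw [← sum_fiberwise_of_maps_to hf, ← sum_fiberwise_of_maps_to hf, ← sum_add_distrib]
  refine sum_le_sum fun b _ => ?_
  have hfiber : ∑ a ∈ A with f a = b, q a * log #{x ∈ A | f x = f a} =
      (∑ a ∈ A with f a = b, q a) * log #{x ∈ A | f x = b} := by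
    rw [sum_mul]
    exact sum_congr rfl fun a ha => by rw [(mem_filter.1 ha).2]
  rw [hfiber]
  exact sum_negMulLog_le _ fun a ha => hq a (mem_filter.1 ha).1

lemma shannonEntropy_eq_sum_negMulLog {ν : α → ℝ} {A : Finset α} (hA : support ν ⊆ A) :
    shannonEntropy ν = ∑ a ∈ A, negMulLog (ν a) := by
  rw [shannonEntropy, finsum_eq_finsetSum_of_support_subset _
    ((support_mul_subset_left _ _).trans hA), ← sum_neg_distrib]
  simp only [negMulLog, neg_mul]

end Entropy

lemma shannonEntropy_convPow_le {G : Type*} [Group G] {S : Set G} (hS : S.Finite)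
    (hSsym : ∀ s ∈ S, s⁻¹ ∈ S) (hSgen : Subgroup.closure S = ⊤) {μ : G → ℝ}
    (hpos : ∀ g, 0 ≤ μ g) (hsum : ∑ᶠ g, μ g = 1) (hsupp : support μ ⊆ S) {C c : ℝ}
    (hW : ∀ k : ℕ, log (wordSphere S k).ncard ≤ C + c * k) (n : ℕ) :
    shannonEntropy (convPow μ n) ≤ log (n + 1) + C + c * meanLength S μ n := by
  classical
  set q := convPow μ n
  set A := (hS.pow n).toFinset
  have hqA : support q ⊆ A := by simpa [A] using support_convPow_subset hsupp n
  have hq0 : ∀ g, 0 ≤ q g := convPow_nonneg hpos n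
  have hq1 : ∑ g ∈ A, q g = 1 := by
    rw [← finsum_eq_finsetSum_of_support_subset _ hqA]
    exact finsum_convPow (hS.subset hsupp) hsum n
  have hmaps : ∀ g ∈ A, wordLength S g ∈ range (n + 1) := fun g hg =>
    mem_range_succ_iff.2 (wordLength_le_of_mem_pow ((hS.pow n).mem_toFinset.1 hg))
  have hlength : ∑ k ∈ range (n + 1), negMulLog (∑ g ∈ A with wordLength S g = k, q g) ≤
      log (n + 1) := by
    simpa using (range (n + 1)).sum_negMulLog_le_log_card
      (fun k _ => sum_nonneg fun g _ => hq0 g) ((sum_fiberwise_of_maps_to hmaps q).trans hq1)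
  have hsphere : ∀ g ∈ A, q g * log #{x ∈ A | wordLength S x = wordLength S g} ≤
      q g * (C + c * wordLength S g) := by
    intro g hg
    refine mul_le_mul_of_nonneg_left (le_trans ?_ (hW _)) (hq0 g)
    have hne : ({x ∈ A | wordLength S x = wordLength S g}).Nonempty := ⟨g, mem_filter.2 ⟨hg, rfl⟩⟩
    refine log_le_log (by exact_mod_cast hne.card_pos) ?_
    rw [← Set.ncard_coe_finset]
    refine Nat.cast_le.2 (Set.ncard_le_ncard (fun x hx => ?_) (wordSphere_finite hS hSsym hSgen _))
    exact (mem_filter.1 hx).2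
  have hmean : meanLength S μ n = ∑ g ∈ A, q g * wordLength S g :=
    finsum_eq_finsetSum_of_support_subset _ ((support_mul_subset_left _ _).trans hqA)
  calc shannonEntropy q = ∑ g ∈ A, negMulLog (q g) := shannonEntropy_eq_sum_negMulLog hqA
    _ ≤ _ := A.sum_negMulLog_le_fiberwise hmaps fun g _ => hq0 g
    _ ≤ log (n + 1) + ∑ g ∈ A, q g * (C + c * wordLength S g) :=
        add_le_add hlength (sum_le_sum hsphere)
    _ = log (n + 1) + C + c * meanLength S μ n := by
        simp only [mul_add, mul_left_comm _ c, sum_add_distrib, ← mul_sum, ← sum_mul, hq1, hmean]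
        ring

section Asymptotics

open Topology

lemma exists_le_add_of_eventually_le {a b : ℕ → ℝ} (h : ∀ᶠ k in atTop, a k ≤ b k) :
    ∃ C, ∀ k, a k ≤ C + b k := by
  obtain ⟨K, hK⟩ := eventually_atTop.1 h
  obtain ⟨C, hC⟩ := ((Set.finite_Iio K).image fun k => a k - b k).bddAbove
  refine ⟨max C 0, fun k => ?_⟩
  rcases lt_or_ge k K with hk | hk
  · linarith [hC ⟨k, hk, rfl⟩, le_max_left C 0]
  · linarith [hK k hk, le_max_right C 0]

lemma eventually_le_mul_of_tendsto_div {a : ℕ → ℝ} {v c : ℝ}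
    (ha : Tendsto (fun n : ℕ => a n / n) atTop (𝓝 v)) (hc : v < c) :
    ∀ᶠ n : ℕ in atTop, a n ≤ c * n := by
  filter_upwards [ha.eventually_lt_const hc, eventually_gt_atTop 0] with n hn hpos
  exact ((div_lt_iff₀ (Nat.cast_pos.2 hpos)).1 hn).le

lemma tendsto_log_add_one_div_atTop : Tendsto (fun n : ℕ => log (n + 1) / n) atTop (𝓝 0) := by
  have h := (tendsto_pow_log_div_mul_add_atTop 1 (-1) 1 one_ne_zero).comp
    (tendsto_atTop_add_const_right _ 1 tendsto_natCast_atTop_atTop)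
  refine h.congr fun n => ?_
  simp

lemma le_mul_of_le_log_add_mul {H L : ℕ → ℝ} {h l C c : ℝ}
    (hH : Tendsto (fun n : ℕ => H n / n) atTop (𝓝 h))
    (hL : Tendsto (fun n : ℕ => L n / n) atTop (𝓝 l))
    (hle : ∀ n : ℕ, H n ≤ log (n + 1) + C + c * L n) : h ≤ c * l := by
  have hbound : Tendsto (fun n : ℕ => log (n + 1) / n + C / n + c * (L n / n)) atTop
      (𝓝 (c * l)) := by
    simpa using (tendsto_log_add_one_div_atTop.add (tendsto_const_div_atTop_nhds_zero_nat C)).add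
      (hL.const_mul c)
  refine le_of_tendsto_of_tendsto hH hbound (Eventually.of_forall fun n => ?_)
  calc H n / n ≤ (log (n + 1) + C + c * L n) / n := div_le_div_of_nonneg_right (hle n) n.cast_nonneg
    _ = _ := by ring

end Asymptotics

theorem fundamental_inequality_general {G : Type*} [Group G] (S : Set G)
    (hSfin : S.Finite) (hSsym : ∀ s ∈ S, s⁻¹ ∈ S)
    (hSgen : Subgroup.closure S = ⊤)
    (μ : G → ℝ) (hpos : ∀ g, 0 ≤ μ g) (hsum : ∑ᶠ g, μ g = 1)
    (hsupp : Function.support μ = S)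
    (v h l : ℝ)
    (hv : Tendsto (fun n : ℕ => Real.log ((wordSphere S n).ncard : ℝ) / (n : ℝ)) atTop
      (nhds v))
    (hh : Tendsto (fun n : ℕ => shannonEntropy (convPow μ n) / (n : ℝ)) atTop (nhds h))
    (hl : Tendsto (fun n : ℕ => meanLength S μ n / (n : ℝ)) atTop (nhds l)) :
    h ≤ l * v := by
  rw [mul_comm]
  have hcont : Tendsto (fun c => c * l) (nhdsWithin v (Set.Ioi v)) (nhds (v * l)) :=
    ((continuous_mul_const l).tendsto v).mono_left nhdsWithin_le_nhds
  refine ge_of_tendsto hcont ?_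
  filter_upwards [self_mem_nhdsWithin] with c (hc : v < c)
  obtain ⟨C, hC⟩ := exists_le_add_of_eventually_le (eventually_le_mul_of_tendsto_div hv hc)
  exact le_mul_of_le_log_add_mul hh hl
    (shannonEntropy_convPow_le hSfin hSsym hSgen hpos hsum hsupp.le hC)

/-- Fundamental inequality: `h ≤ l · v`, where `v` is the logarithmic volume, `h` the
entropy of `(G, μ)` and `l` the drift, for any symmetric measure `μ` supported on the
symmetric generating set `S`. -/
theorem fundamental_inequality {G : Type*} [Group G] [Countable G] [Infinite G] (S : Set G)
    (hSfin : S.Finite) (hSsym : ∀ s ∈ S, s⁻¹ ∈ S) (hSone : (1 : G) ∉ S)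
    (hSgen : Subgroup.closure S = ⊤)
    (μ : G → ℝ) (hpos : ∀ g, 0 ≤ μ g) (hsum : ∑ᶠ g, μ g = 1)
    (hμsym : ∀ g, μ g = μ g⁻¹) (hsupp : Function.support μ = S)
    (v h l : ℝ)
    (hv : Tendsto (fun n : ℕ => Real.log ((wordSphere S n).ncard : ℝ) / (n : ℝ)) atTop
      (nhds v))
    (hh : Tendsto (fun n : ℕ => shannonEntropy (convPow μ n) / (n : ℝ)) atTop (nhds h))
    (hl : Tendsto (fun n : ℕ => meanLength S μ n / (n : ℝ)) atTop (nhds l)) :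
    h ≤ l * v :=
  fundamental_inequality_general S hSfin hSsym hSgen μ hpos hsum hsupp v h l hv hh hl
end

section
/- Let ν be a probability measure on a finite set X and let V ⊆ X with both V and X∖V nonempty. Then the Shannon entropy of ν satisfies H(ν) ≤ log 2 + ν(V) · log |V| + (1 − ν(V)) · log |X∖V|. In particular, if ν(V) ≥ 1 − ε then H(ν) ≤ log 2 + log |V| + ε · log |X∖V|. -/
/-!
Jensen's inequality for the concave function `t ↦ -t log t`, with uniform weights on a set `S`,
bounds `∑_{x ∈ S} -ν x log ν x` by `-p log p + p log |S|`, where `p = ν(S)`; apply it to `V` and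
to `Vᶜ`. Adding the two bounds, the `negMulLog` terms form the binary entropy of `ν(V)`, which
is at most `log 2`.
-/

open Finset Real

theorem Real.sum_negMulLog_le_negMulLog_sum_add {ι : Type*} (s : Finset ι) (w : ι → ℝ)
    (hw : ∀ i ∈ s, 0 ≤ w i) :
    ∑ i ∈ s, negMulLog (w i) ≤ negMulLog (∑ i ∈ s, w i) + (∑ i ∈ s, w i) * log #s := by
  obtain rfl | hs := s.eq_empty_or_nonempty
  · simp
  have hn : (0 : ℝ) < #s := by exact_mod_cast hs.card_pos
  have jensen := concaveOn_negMulLog.le_map_sum (t := s) (w := fun _ ↦ (#s : ℝ)⁻¹) (p := w)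
    (fun _ _ ↦ by positivity) (by simp [hn.ne']) hw
  rw [← smul_sum, ← smul_sum, smul_eq_mul, smul_eq_mul, mul_comm, negMulLog_mul,
    negMulLog, log_inv] at jensen
  have := mul_le_mul_of_nonneg_left jensen hn.le
  field_simp at this
  linarith

theorem Real.sum_negMulLog_le_log_two_add {X : Type*} [Fintype X] [DecidableEq X] (ν : X → ℝ)
    (hpos : ∀ x, 0 ≤ ν x) (hsum : ∑ x, ν x = 1) (V : Finset X) :
    ∑ x, negMulLog (ν x) ≤
      log 2 + (∑ x ∈ V, ν x) * log #V + (1 - ∑ x ∈ V, ν x) * log #Vᶜ := by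
  have hcompl : ∑ x ∈ Vᶜ, ν x = 1 - ∑ x ∈ V, ν x := by
    rw [← hsum, ← sum_add_sum_compl V ν]; ring
  have hV := sum_negMulLog_le_negMulLog_sum_add V ν fun x _ ↦ hpos x
  have hVc := sum_negMulLog_le_negMulLog_sum_add Vᶜ ν fun x _ ↦ hpos x
  have hbin := binEntropy_le_log_two (p := ∑ x ∈ V, ν x)
  rw [hcompl] at hVc
  rw [binEntropy_eq_negMulLog_add_negMulLog_one_sub] at hbin
  rw [← sum_add_sum_compl V]
  linarith

theorem entropy_decomposition_general {X : Type*} [Fintype X] [DecidableEq X] (ν : X → ℝ)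
    (hpos : ∀ x, 0 ≤ ν x) (hsum : ∑ x, ν x = 1)
    (V : Finset X) :
    (-∑ x, ν x * Real.log (ν x)) ≤
        Real.log 2 + (∑ x ∈ V, ν x) * Real.log (V.card : ℝ)
          + (1 - ∑ x ∈ V, ν x) * Real.log ((Vᶜ).card : ℝ) ∧
      ∀ ε : ℝ, 1 - ε ≤ ∑ x ∈ V, ν x →
        (-∑ x, ν x * Real.log (ν x)) ≤
          Real.log 2 + Real.log (V.card : ℝ) + ε * Real.log ((Vᶜ).card : ℝ) := by
  have hentropy : -∑ x, ν x * log (ν x) = ∑ x, negMulLog (ν x) := by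
    simp only [negMulLog_eq_neg, sum_neg_distrib]
  have hbound := sum_negMulLog_le_log_two_add ν hpos hsum V
  rw [hentropy]
  refine ⟨hbound, fun ε hε ↦ hbound.trans ?_⟩
  have hV_le_one : ∑ x ∈ V, ν x ≤ 1 := hsum ▸ sum_le_univ_sum_of_nonneg hpos
  gcongr
  · exact mul_le_of_le_one_left (log_natCast_nonneg _) hV_le_one
  linarith

/-- Entropy decomposition estimate: for a probability measure `ν` on a finite set `X` and
`V ⊆ X` with `V` and `X∖V` nonempty,
`H(ν) ≤ log 2 + ν(V)·log |V| + (1 − ν(V))·log |X∖V|`; in particular, if `ν(V) ≥ 1 − ε`,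
then `H(ν) ≤ log 2 + log |V| + ε·log |X∖V|`. -/
theorem entropy_decomposition {X : Type*} [Fintype X] [DecidableEq X] (ν : X → ℝ)
    (hpos : ∀ x, 0 ≤ ν x) (hsum : ∑ x, ν x = 1)
    (V : Finset X) (hV : V.Nonempty) (hVc : Vᶜ.Nonempty) :
    (-∑ x, ν x * Real.log (ν x)) ≤
        Real.log 2 + (∑ x ∈ V, ν x) * Real.log (V.card : ℝ)
          + (1 - ∑ x ∈ V, ν x) * Real.log ((Vᶜ).card : ℝ) ∧
      ∀ ε : ℝ, 1 - ε ≤ ∑ x ∈ V, ν x →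
        (-∑ x, ν x * Real.log (ν x)) ≤
          Real.log 2 + Real.log (V.card : ℝ) + ε * Real.log ((Vᶜ).card : ℝ) :=
  entropy_decomposition_general ν hpos hsum V
end

section
/- Let F_k be the free group on k generators, k ≥ 2, and let μ be the uniform probability measure on the 2k elements {x₁, …, x_k, x₁⁻¹, …, x_k⁻¹}. Then the entropy of the pair (F_k, μ) equals ((k−1)/k) · log(2k−1): lim_{n→∞} H(μ^{*n})/n = ((k−1)/k) · log(2k−1). -/
open Filter

/-- The uniform probability measure on the `2k` natural generators
`{x₁, …, x_k, x₁⁻¹, …, x_k⁻¹}` of the free group `F_k`. -/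
noncomputable def freeUniform (k : ℕ) : FreeGroup (Fin k) → ℝ :=
  Set.indicator {g | ∃ i : Fin k, g = FreeGroup.of i ∨ g = (FreeGroup.of i)⁻¹}
    (fun _ => 1 / (2 * (k : ℝ)))


namespace FGE

variable {k : ℕ}

abbrev β (k : ℕ) := Fin k × Bool

/-- flip a letter -/
def fl (p : β k) : β k := (p.1, !p.2)

lemma fl_fl (p : β k) : fl (fl p) = p := by simp [fl]

def flE : Equiv.Perm (β k) := Function.Involutive.toPerm fl fl_fl

/-- generator as group element -/
def gen (p : β k) : FreeGroup (Fin k) := FreeGroup.mk [p]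

/-- non-cancellation condition -/
def cond (a b : β k) : Prop := ¬(a.1 = b.1 ∧ a.2 = !b.2)

instance : DecidablePred fun q : β k × β k => cond q.1 q.2 := fun _ => by
  unfold cond; infer_instance

def IsRed (L : List (β k)) : Prop := List.Chain' cond L

lemma isRed_reduce (L : List (β k)) : IsRed (FreeGroup.reduce L) := by
  induction L with
  | nil => exact List.isChain_nil
  | cons x L ih =>
    rw [FreeGroup.reduce.cons]
    rcases h : FreeGroup.reduce L with _ | ⟨hd, tl⟩
    · exact List.isChain_singleton x
    · rw [h] at ih
      by_cases hc : x.1 = hd.1 ∧ x.2 = !hd.2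
      · simp only [if_pos hc]; exact ih.tail
      · simp only [if_neg hc]
        exact List.isChain_cons_cons.2 ⟨hc, ih⟩

lemma reduce_eq_self {L : List (β k)} (h : IsRed L) : FreeGroup.reduce L = L := by
  induction L with
  | nil => rfl
  | cons x L ih =>
    rw [FreeGroup.reduce.cons, ih h.tail]
    cases L with
    | nil => rfl
    | cons hd tl =>
      have hc : cond x hd := (List.isChain_cons_cons.1 h).1
      simp only [if_neg hc]

lemma isRed_toWord (g : FreeGroup (Fin k)) : IsRed g.toWord := by
  rw [← FreeGroup.reduce_toWord]; exact isRed_reduce _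

lemma toWord_gen (p : β k) : (gen p).toWord = [p] := by
  rw [gen, FreeGroup.toWord_mk, FreeGroup.reduce_singleton]

lemma gen_injective : Function.Injective (gen (k := k)) := fun p q h => by
  have := congrArg FreeGroup.toWord h
  rw [toWord_gen, toWord_gen] at this
  exact List.singleton_injective this

lemma norm_gen (p : β k) : (gen p).norm = 1 := by
  rw [FreeGroup.norm, toWord_gen]; rfl

lemma gen_inv (p : β k) : (gen p)⁻¹ = gen (fl p) := by
  rw [gen, FreeGroup.inv_mk]
  rfl

/-- key multiplication lemma -/
lemma toWord_mul_gen (g : FreeGroup (Fin k)) (s : β k) :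
    (g * gen s).toWord =
      if g.toWord.getLast? = some (fl s) then g.toWord.dropLast else g.toWord ++ [s] := by
  classical
  have hg : g * gen s = FreeGroup.mk (g.toWord ++ [s]) := by
    conv_lhs => rw [← FreeGroup.mk_toWord (x := g), gen, FreeGroup.mul_mk]
  rw [hg, FreeGroup.toWord_mk]
  by_cases h : g.toWord.getLast? = some (fl s)
  · have hne : g.toWord ≠ [] := by
      intro h0; rw [h0] at h; simp at h
    have hw : g.toWord.dropLast ++ [fl s] = g.toWord := by
      have := List.dropLast_append_getLast hne
      rw [List.getLast?_eq_getLast hne, Option.some_inj] at h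
      rw [h] at this; exact this
    have hstep : FreeGroup.Red.Step
        (g.toWord.dropLast ++ (s.1, !s.2) :: (s.1, !(!s.2)) :: [])
        (g.toWord.dropLast ++ []) := FreeGroup.Red.Step.not
    have hs2 : ((s.1, !(!s.2)) : β k) = s := by simp
    rw [hs2] at hstep
    have hlist : g.toWord ++ [s] = g.toWord.dropLast ++ (fl s) :: s :: [] := by
      rw [← hw]; simp
    rw [if_pos h, hlist]
    have := FreeGroup.reduce.Step.eq hstep
    rw [show ((fl s) : β k) = (s.1, !s.2) from rfl, this, List.append_nil]
    exact reduce_eq_self ((isRed_toWord g).prefix g.toWord.dropLast_prefix)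
  · rw [if_neg h]
    apply reduce_eq_self
    apply List.isChain_append.2
    refine ⟨isRed_toWord g, List.isChain_singleton s, ?_⟩
    intro x hx y hy
    rw [Option.mem_def] at hx
    rw [List.head?_cons, Option.mem_def, Option.some_inj] at hy
    subst hy
    intro ⟨h1, h2⟩
    exact h (by rw [hx, Option.some_inj]; exact Prod.ext h1 h2)

lemma norm_mul_gen_cancel {g : FreeGroup (Fin k)} {s : β k}
    (h : g.toWord.getLast? = some (fl s)) :
    (g * gen s).norm + 1 = g.norm := by
  have hne : g.toWord ≠ [] := fun h0 => by rw [h0] at h; simp at h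
  have hpos : 0 < g.toWord.length := List.length_pos_iff.2 hne
  rw [FreeGroup.norm, toWord_mul_gen, if_pos h, List.length_dropLast, FreeGroup.norm]
  omega

lemma norm_mul_gen_ext {g : FreeGroup (Fin k)} {s : β k}
    (h : g.toWord.getLast? ≠ some (fl s)) :
    (g * gen s).norm = g.norm + 1 := by
  rw [FreeGroup.norm, toWord_mul_gen, if_neg h, List.length_append, FreeGroup.norm]
  rfl

lemma norm_pos_of_ne_one {g : FreeGroup (Fin k)} (hg : g ≠ 1) : 1 ≤ g.norm := by
  rcases Nat.eq_zero_or_pos g.norm with h | h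
  · exact absurd (FreeGroup.norm_eq_zero.1 h) hg
  · exact h

lemma norm_le_norm_mul_gen_add_one (g : FreeGroup (Fin k)) (p : β k) :
    g.norm ≤ (g * gen p).norm + 1 := by
  have hge : g = (g * gen p) * (gen p)⁻¹ := by group
  calc g.norm = ((g * gen p) * (gen p)⁻¹).norm := by rw [← hge]
    _ ≤ (g * gen p).norm + ((gen p)⁻¹).norm := FreeGroup.norm_mul_le _ _
    _ = (g * gen p).norm + 1 := by rw [FreeGroup.norm_inv_eq, norm_gen]

lemma card_beta : Fintype.card (β k) = 2 * k := by
  simp [Fintype.card_prod]; ring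

lemma norm_mul_gen_eq_ite {g : FreeGroup (Fin k)} {t : β k}
    (ht : g.toWord.getLast? = some t) (p : β k) :
    (g * gen p).norm = if p = fl t then g.norm - 1 else g.norm + 1 := by
  have hg : g ≠ 1 := by
    intro h0; rw [h0, FreeGroup.toWord_one] at ht; simp at ht
  by_cases hp : p = fl t
  · subst hp
    rw [if_pos rfl]
    have hc : g.toWord.getLast? = some (fl (fl t)) := by rw [fl_fl]; exact ht
    have := norm_mul_gen_cancel hc
    omega
  · rw [if_neg hp]
    apply norm_mul_gen_ext
    rw [ht]
    intro hcon
    rw [Option.some_inj] at hcon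
    exact hp (by rw [hcon, fl_fl])

lemma sum_gen (F : ℕ → ℝ) {g : FreeGroup (Fin k)} {t : β k}
    (ht : g.toWord.getLast? = some t) :
    ∑ p : β k, F ((g * gen p).norm)
      = F (g.norm - 1) + ((Fintype.card (β k) - 1 : ℕ) : ℝ) * F (g.norm + 1) := by
  classical
  have key : ∀ p : β k, F ((g * gen p).norm)
      = if p = fl t then F (g.norm - 1) else F (g.norm + 1) := by
    intro p
    rw [norm_mul_gen_eq_ite ht p, apply_ite F]
  simp_rw [key]
  rw [← Finset.add_sum_erase Finset.univ _ (Finset.mem_univ (fl t))]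
  congr 1
  · exact if_pos rfl
  rw [Finset.sum_congr rfl (fun x hx => if_neg (Finset.ne_of_mem_erase hx)),
    Finset.sum_const, Finset.card_erase_of_mem (Finset.mem_univ _), Finset.card_univ,
    nsmul_eq_mul]

lemma sum_gen_one (F : ℕ → ℝ) :
    ∑ p : β k, F ((gen p).norm) = ((Fintype.card (β k) : ℕ) : ℝ) * F 1 := by
  simp only [norm_gen]
  rw [Finset.sum_const, Finset.card_univ, nsmul_eq_mul]


/-! ### Ball finsets -/

def ballW (k N : ℕ) : Finset (List (β k)) :=
  (Finset.range (N+1)).biUnion fun l =>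
    (Finset.univ : Finset (Fin l → β k)).image List.ofFn

def ball (k N : ℕ) : Finset (FreeGroup (Fin k)) := (ballW k N).image FreeGroup.mk

lemma mem_ball_of_norm_le {g : FreeGroup (Fin k)} {N : ℕ} (h : g.norm ≤ N) :
    g ∈ ball k N := by
  refine Finset.mem_image.2 ⟨g.toWord, ?_, FreeGroup.mk_toWord⟩
  refine Finset.mem_biUnion.2 ⟨g.toWord.length, Finset.mem_range.2 (Nat.lt_succ_of_le h), ?_⟩
  exact Finset.mem_image.2 ⟨g.toWord.get, Finset.mem_univ _, List.ofFn_get _⟩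

lemma norm_le_of_mem_ball {g : FreeGroup (Fin k)} {N : ℕ} (h : g ∈ ball k N) :
    g.norm ≤ N := by
  rcases Finset.mem_image.1 h with ⟨w, hw, rfl⟩
  rcases Finset.mem_biUnion.1 hw with ⟨l, hl, hw2⟩
  rcases Finset.mem_image.1 hw2 with ⟨f, _, rfl⟩
  calc (FreeGroup.mk (List.ofFn f)).norm ≤ (List.ofFn f).length := FreeGroup.norm_mk_le
    _ = l := List.length_ofFn
    _ ≤ N := by have := Finset.mem_range.1 hl; omega

lemma sum_congr_of_support {F : FreeGroup (Fin k) → ℝ} {s t : Finset (FreeGroup (Fin k))}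
    (hs : ∀ g, F g ≠ 0 → g ∈ s) (ht : ∀ g, F g ≠ 0 → g ∈ t) :
    ∑ g ∈ s, F g = ∑ g ∈ t, F g := by
  classical
  have h1 : ∑ g ∈ s, F g = ∑ g ∈ s ∪ t, F g :=
    Finset.sum_subset Finset.subset_union_left
      (fun x _ hx => by by_contra h0; exact hx (hs x h0))
  have h2 : ∑ g ∈ t, F g = ∑ g ∈ s ∪ t, F g :=
    Finset.sum_subset Finset.subset_union_right
      (fun x _ hx => by by_contra h0; exact hx (ht x h0))
  rw [h1, h2]

lemma finsum_eq_sum' {F : FreeGroup (Fin k) → ℝ} {s : Finset (FreeGroup (Fin k))}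
    (h : ∀ g, F g ≠ 0 → g ∈ s) : ∑ᶠ g, F g = ∑ g ∈ s, F g :=
  finsum_eq_sum_of_support_subset F (fun x hx => h x hx)

/-! ### The convolution step formula -/

lemma gen_eq_of (i : Fin k) : gen (i, true) = FreeGroup.of i := rfl

lemma gen_eq_of_inv (i : Fin k) : gen (i, false) = (FreeGroup.of i)⁻¹ := by
  rw [← gen_eq_of i, gen_inv]
  rfl

lemma freeUniform_apply_gen (p : β k) : freeUniform k (gen p) = 1 / (2 * (k : ℝ)) := by
  rw [freeUniform, Set.indicator_of_mem]
  refine ⟨p.1, ?_⟩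
  rcases p with ⟨i, _ | _⟩
  · right; rw [← gen_eq_of_inv]
  · left; rw [← gen_eq_of]

lemma freeUniform_support {x : FreeGroup (Fin k)} (h : freeUniform k x ≠ 0) :
    ∃ p : β k, x = gen p := by
  rw [freeUniform] at h
  have hx := Set.mem_of_indicator_ne_zero h
  rcases hx with ⟨i, hi | hi⟩
  · exact ⟨(i, true), by rw [hi, gen_eq_of]⟩
  · exact ⟨(i, false), by rw [hi, gen_eq_of_inv]⟩

lemma mul_gen_injective (g : FreeGroup (Fin k)) :
    Function.Injective (fun p : β k => g * gen p) := by
  intro p q h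
  simp only at h
  exact gen_injective (mul_left_cancel h)

lemma convPow_succ (n : ℕ) (g : FreeGroup (Fin k)) :
    convPow (freeUniform k) (n+1) g
      = (2 * (k : ℝ))⁻¹ * ∑ p : β k, convPow (freeUniform k) n (g * gen p) := by
  classical
  show convMeas (convPow (freeUniform k) n) (freeUniform k) g = _
  rw [convMeas]
  rw [finsum_eq_sum' (s := Finset.univ.image fun p : β k => g * gen p) ?_]
  · rw [Finset.sum_image (fun p _ q _ h => mul_gen_injective g h)]
    have key : ∀ p : β k, (g * gen p)⁻¹ * g = gen (fl p) := by
      intro p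
      rw [← gen_inv]
      group
    calc ∑ p : β k, convPow (freeUniform k) n (g * gen p) * freeUniform k ((g * gen p)⁻¹ * g)
        = ∑ p : β k, convPow (freeUniform k) n (g * gen p) * (2 * (k:ℝ))⁻¹ := by
          refine Finset.sum_congr rfl fun p _ => ?_
          rw [key p, freeUniform_apply_gen, one_div]
      _ = (2 * (k : ℝ))⁻¹ * ∑ p : β k, convPow (freeUniform k) n (g * gen p) := by
          rw [← Finset.sum_mul, mul_comm]
  · intro a ha
    have hμ : freeUniform k (a⁻¹ * g) ≠ 0 := fun h0 => ha (by rw [h0, mul_zero])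
    rcases freeUniform_support hμ with ⟨p, hp⟩
    have : a = g * gen (fl p) := by
      rw [← gen_inv]
      have : a * (gen p) = g := by rw [← hp]; group
      rw [← this]
      group
    exact Finset.mem_image.2 ⟨fl p, Finset.mem_univ _, this.symm⟩

lemma convPow_nonneg (n : ℕ) (g : FreeGroup (Fin k)) : 0 ≤ convPow (freeUniform k) n g := by
  induction n generalizing g with
  | zero => exact Set.indicator_nonneg (fun _ _ => zero_le_one) g
  | succ n ih =>
    rw [convPow_succ]
    exact mul_nonneg (by positivity) (Finset.sum_nonneg fun p _ => ih _)

lemma convPow_norm_le {n : ℕ} {g : FreeGroup (Fin k)} (h : convPow (freeUniform k) n g ≠ 0) :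
    g.norm ≤ n := by
  induction n generalizing g with
  | zero =>
    have : g ∈ ({1} : Set (FreeGroup (Fin k))) := Set.mem_of_indicator_ne_zero h
    rw [Set.mem_singleton_iff] at this
    rw [this, FreeGroup.norm_one]
  | succ n ih =>
    rw [convPow_succ] at h
    have hsum : ∑ p : β k, convPow (freeUniform k) n (g * gen p) ≠ 0 := by
      intro h0; rw [h0, mul_zero] at h; exact h rfl
    rcases Finset.exists_ne_zero_of_sum_ne_zero hsum with ⟨p, _, hp⟩
    have := ih hp
    have := norm_le_norm_mul_gen_add_one g p
    omega


lemma norm_mul_gen_le (a : FreeGroup (Fin k)) (q : β k) : (a * gen q).norm ≤ a.norm + 1 := by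
  have := FreeGroup.norm_mul_le a (gen q)
  rwa [norm_gen] at this

lemma gen_mul_fl (a : FreeGroup (Fin k)) (p : β k) : a * gen (fl p) * gen p = a := by
  have h : gen p = (gen (fl p))⁻¹ := by rw [gen_inv, fl_fl]
  rw [h]
  group

/-- The master step lemma. -/
lemma step_sum (n : ℕ) (F : FreeGroup (Fin k) → ℝ) :
    ∑ g ∈ ball k (n+1), F g * convPow (freeUniform k) (n+1) g
      = ∑ a ∈ ball k n, convPow (freeUniform k) n a
          * ((2 * (k:ℝ))⁻¹ * ∑ p : β k, F (a * gen p)) := by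
  classical
  set f := convPow (freeUniform k) n with hf
  have inner : ∀ p : β k, ∑ g ∈ ball k (n+1), F g * f (g * gen p)
      = ∑ a ∈ ball k n, F (a * gen (fl p)) * f a := by
    intro p
    calc ∑ g ∈ ball k (n+1), F g * f (g * gen p)
        = ∑ g ∈ ball k (n+1), F ((g * gen p) * gen (fl p)) * f (g * gen p) := by
          refine Finset.sum_congr rfl fun g _ => ?_
          congr 2
          rw [← gen_inv]
          group
      _ = ∑ a ∈ (ball k (n+1)).image (· * gen p), F (a * gen (fl p)) * f a := by
          rw [Finset.sum_image (fun x _ y _ h => mul_right_cancel h)]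
      _ = ∑ a ∈ ball k n, F (a * gen (fl p)) * f a := by
          apply sum_congr_of_support
          · intro a ha
            have hfa : f a ≠ 0 := fun h0 => ha (by rw [h0, mul_zero])
            have hna : a.norm ≤ n := convPow_norm_le hfa
            refine Finset.mem_image.2 ⟨a * gen (fl p), mem_ball_of_norm_le ?_, gen_mul_fl a p⟩
            have := norm_mul_gen_le a (fl p)
            omega
          · intro a ha
            have hfa : f a ≠ 0 := fun h0 => ha (by rw [h0, mul_zero])
            exact mem_ball_of_norm_le (convPow_norm_le hfa)
  calc ∑ g ∈ ball k (n+1), F g * convPow (freeUniform k) (n+1) g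
      = ∑ g ∈ ball k (n+1), (2 * (k:ℝ))⁻¹ * ∑ p : β k, F g * f (g * gen p) := by
        refine Finset.sum_congr rfl fun g _ => ?_
        rw [convPow_succ, mul_left_comm, Finset.mul_sum]
    _ = (2 * (k:ℝ))⁻¹ * ∑ g ∈ ball k (n+1), ∑ p : β k, F g * f (g * gen p) := by
        rw [Finset.mul_sum]
    _ = (2 * (k:ℝ))⁻¹ * ∑ p : β k, ∑ g ∈ ball k (n+1), F g * f (g * gen p) := by
        rw [Finset.sum_comm]
    _ = (2 * (k:ℝ))⁻¹ * ∑ p : β k, ∑ a ∈ ball k n, F (a * gen (fl p)) * f a := by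
        rw [Finset.sum_congr rfl fun p _ => inner p]
    _ = (2 * (k:ℝ))⁻¹ * ∑ p : β k, ∑ a ∈ ball k n, F (a * gen p) * f a := by
        congr 1
        exact Fintype.sum_bijective fl (Function.Involutive.bijective fl_fl) _ _ (fun p => rfl)
    _ = ∑ a ∈ ball k n, f a * ((2 * (k:ℝ))⁻¹ * ∑ p : β k, F (a * gen p)) := by
        rw [Finset.sum_comm, Finset.mul_sum]
        refine Finset.sum_congr rfl fun a _ => ?_
        simp only [Finset.mul_sum]
        refine Finset.sum_congr rfl fun p _ => ?_
        ring

/-! ### Mass, mean and Lyapunov quantities -/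

section Quantities

variable (k)

noncomputable def En (n : ℕ) : ℝ :=
  ∑ g ∈ ball k n, (g.norm : ℝ) * convPow (freeUniform k) n g

noncomputable def Wn (n : ℕ) : ℝ :=
  ∑ g ∈ ball k n, ((2:ℝ)⁻¹) ^ g.norm * convPow (freeUniform k) n g

end Quantities

variable (hk : 2 ≤ k)
include hk

lemma two_k_pos : (0:ℝ) < 2 * (k:ℝ) := by
  have : (2:ℝ) ≤ (k:ℝ) := by exact_mod_cast hk
  linarith

omit hk in
lemma card_beta_cast : ((Fintype.card (β k) : ℕ) : ℝ) = 2 * (k:ℝ) := by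
  rw [card_beta]; push_cast; ring

omit hk in
lemma sum_one_beta : ∑ _p : β k, (1:ℝ) = 2 * (k:ℝ) := by
  rw [Finset.sum_const, Finset.card_univ, nsmul_eq_mul, mul_one, card_beta_cast]

lemma mass_eq_one (n : ℕ) : ∑ g ∈ ball k n, convPow (freeUniform k) n g = 1 := by
  induction n with
  | zero =>
    have h1 : ∑ g ∈ ball k 0, convPow (freeUniform k) 0 g
        = ∑ g ∈ ({1} : Finset (FreeGroup (Fin k))), convPow (freeUniform k) 0 g := by
      apply sum_congr_of_support
      · intro g hg
        have : g ∈ ({1} : Set (FreeGroup (Fin k))) := Set.mem_of_indicator_ne_zero hg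
        rw [Set.mem_singleton_iff] at this
        subst this
        exact mem_ball_of_norm_le (by rw [FreeGroup.norm_one])
      · intro g hg
        have : g ∈ ({1} : Set (FreeGroup (Fin k))) := Set.mem_of_indicator_ne_zero hg
        rw [Set.mem_singleton_iff] at this
        simp [this]
    rw [h1, Finset.sum_singleton]
    show Set.indicator {(1 : FreeGroup (Fin k))} (fun _ => (1:ℝ)) 1 = 1
    rw [Set.indicator_of_mem (Set.mem_singleton _)]
  | succ n ih =>
    have := step_sum (k := k) n (fun _ => 1)
    simp only [one_mul, mul_one] at this
    rw [this, sum_one_beta]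
    have hne : (2 * (k:ℝ)) ≠ 0 := ne_of_gt (two_k_pos hk)
    rw [inv_mul_cancel₀ hne]
    simpa using ih

omit hk in
lemma convPow_one_le_Wn (n : ℕ) : convPow (freeUniform k) n 1 ≤ Wn k n := by
  have h1 : (1 : FreeGroup (Fin k)) ∈ ball k n :=
    mem_ball_of_norm_le (by rw [FreeGroup.norm_one]; omega)
  have := Finset.single_le_sum (f := fun g : FreeGroup (Fin k) =>
    ((2:ℝ)⁻¹) ^ g.norm * convPow (freeUniform k) n g)
    (fun g _ => mul_nonneg (by positivity) (convPow_nonneg n g)) h1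
  simp only [FreeGroup.norm_one, pow_zero, one_mul] at this
  exact this


lemma kR_two : (2:ℝ) ≤ (k:ℝ) := by exact_mod_cast hk

omit hk in
lemma sum_conv_zero (N : ℕ) (F : FreeGroup (Fin k) → ℝ) :
    ∑ g ∈ ball k N, F g * convPow (freeUniform k) 0 g = F 1 := by
  have h1 : ∑ g ∈ ball k N, F g * convPow (freeUniform k) 0 g
      = ∑ g ∈ ({1} : Finset (FreeGroup (Fin k))), F g * convPow (freeUniform k) 0 g := by
    apply sum_congr_of_support
    · intro g hg
      have hg2 : convPow (freeUniform k) 0 g ≠ 0 := fun h0 => hg (by rw [h0, mul_zero])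
      have : g ∈ ({1} : Set (FreeGroup (Fin k))) := Set.mem_of_indicator_ne_zero hg2
      rw [Set.mem_singleton_iff] at this
      subst this
      exact mem_ball_of_norm_le (by rw [FreeGroup.norm_one]; omega)
    · intro g hg
      have hg2 : convPow (freeUniform k) 0 g ≠ 0 := fun h0 => hg (by rw [h0, mul_zero])
      have : g ∈ ({1} : Set (FreeGroup (Fin k))) := Set.mem_of_indicator_ne_zero hg2
      simpa using this
  rw [h1, Finset.sum_singleton]
  show F 1 * Set.indicator {(1 : FreeGroup (Fin k))} (fun _ => (1:ℝ)) 1 = F 1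
  rw [Set.indicator_of_mem (Set.mem_singleton _), mul_one]

lemma avg_norm {a : FreeGroup (Fin k)} (ha : a ≠ 1) :
    (2 * (k:ℝ))⁻¹ * ∑ p : β k, (((a * gen p).norm : ℕ) : ℝ)
      = (a.norm : ℝ) + 1 - 1/(k:ℝ) := by
  have hne : a.toWord ≠ [] := fun h0 => ha (FreeGroup.toWord_eq_nil_iff.1 h0)
  have ht : a.toWord.getLast? = some (a.toWord.getLast hne) := List.getLast?_eq_getLast hne
  have hl : 1 ≤ a.norm := norm_pos_of_ne_one ha
  rw [sum_gen (fun m => (m:ℝ)) ht, card_beta]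
  have h1 : ((a.norm - 1 : ℕ) : ℝ) = (a.norm : ℝ) - 1 := by
    rw [Nat.cast_sub hl]; norm_num
  have h2 : ((2*k - 1 : ℕ) : ℝ) = 2*(k:ℝ) - 1 := by
    rw [Nat.cast_sub (by omega)]; push_cast; ring
  rw [h1, h2]
  have hk0 : (k:ℝ) ≠ 0 := by
    have := kR_two hk; intro h; rw [h] at this; norm_num at this
  push_cast
  field_simp
  ring

lemma avg_half (a : FreeGroup (Fin k)) :
    (2 * (k:ℝ))⁻¹ * ∑ p : β k, ((2:ℝ)⁻¹) ^ (a * gen p).norm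
      ≤ (7/8) * ((2:ℝ)⁻¹) ^ a.norm := by
  have hK := kR_two hk
  have h2K : (0:ℝ) < 2 * (k:ℝ) := by linarith
  by_cases ha : a = 1
  · subst ha
    have : ∀ p : β k, ((2:ℝ)⁻¹) ^ ((1 : FreeGroup (Fin k)) * gen p).norm = (2:ℝ)⁻¹ := by
      intro p; rw [one_mul, norm_gen, pow_one]
    simp only [this, Finset.sum_const, Finset.card_univ, nsmul_eq_mul, card_beta_cast]
    rw [FreeGroup.norm_one, pow_zero, inv_mul_cancel_left₀ (ne_of_gt h2K)]
    norm_num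
  · have hne : a.toWord ≠ [] := fun h0 => ha (FreeGroup.toWord_eq_nil_iff.1 h0)
    have ht : a.toWord.getLast? = some (a.toWord.getLast hne) := List.getLast?_eq_getLast hne
    have hl : 1 ≤ a.norm := norm_pos_of_ne_one ha
    obtain ⟨m, hm⟩ : ∃ m, a.norm = m + 1 := ⟨a.norm - 1, by omega⟩
    rw [sum_gen (fun m => ((2:ℝ)⁻¹)^m) ht, card_beta, hm]
    have h2 : ((2*k - 1 : ℕ) : ℝ) = 2*(k:ℝ) - 1 := by
      rw [Nat.cast_sub (by omega)]; push_cast; ring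
    rw [h2]
    simp only [Nat.add_sub_cancel]
    set y := ((2:ℝ)⁻¹) ^ m with hy
    have hy0 : 0 ≤ y := by positivity
    have e1 : ((2:ℝ)⁻¹) ^ (m + 1 + 1) = y * (4:ℝ)⁻¹ := by
      rw [pow_succ, pow_succ, ← hy]; ring_nf
    have e2 : ((2:ℝ)⁻¹) ^ (m + 1) = y * (2:ℝ)⁻¹ := by rw [pow_succ, ← hy]
    rw [e1, e2, inv_mul_le_iff₀ h2K]
    nlinarith

/-- pointwise upper bound `f_n(g) ≤ (2k-1)^{-|g|}` -/
lemma convPow_le_pow (n : ℕ) (g : FreeGroup (Fin k)) :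
    convPow (freeUniform k) n g ≤ ((2 * (k:ℝ) - 1)⁻¹) ^ g.norm := by
  have hK := kR_two hk
  have hc1 : (1:ℝ) ≤ 2 * (k:ℝ) - 1 := by linarith
  have hc0 : (0:ℝ) < 2 * (k:ℝ) - 1 := by linarith
  have hB1 : (2 * (k:ℝ) - 1)⁻¹ ≤ 1 := by
    rw [inv_le_one_iff₀]; right; exact hc1
  have hB0 : (0:ℝ) ≤ (2 * (k:ℝ) - 1)⁻¹ := by positivity
  induction n generalizing g with
  | zero =>
    by_cases hg : g = 1
    · subst hg
      rw [FreeGroup.norm_one, pow_zero]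
      show Set.indicator {(1 : FreeGroup (Fin k))} (fun _ => (1:ℝ)) 1 ≤ 1
      rw [Set.indicator_of_mem (Set.mem_singleton _)]
    · have : convPow (freeUniform k) 0 g = 0 := by
        by_contra h0
        have : g ∈ ({1} : Set (FreeGroup (Fin k))) := Set.mem_of_indicator_ne_zero h0
        exact hg (by simpa using this)
      rw [this]
      positivity
  | succ n ih =>
    rw [convPow_succ]
    have step1 : ∑ p : β k, convPow (freeUniform k) n (g * gen p)
        ≤ ∑ p : β k, ((2 * (k:ℝ) - 1)⁻¹) ^ (g * gen p).norm :=
      Finset.sum_le_sum fun p _ => ih _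
    have h2K : (0:ℝ) < 2 * (k:ℝ) := by linarith
    by_cases hg : g = 1
    · subst hg
      have : ∀ p : β k, ((2 * (k:ℝ) - 1)⁻¹) ^ ((1 : FreeGroup (Fin k)) * gen p).norm
          = (2 * (k:ℝ) - 1)⁻¹ := by
        intro p; rw [one_mul, norm_gen, pow_one]
      calc (2 * (k:ℝ))⁻¹ * ∑ p : β k, convPow (freeUniform k) n (1 * gen p)
          ≤ (2 * (k:ℝ))⁻¹ * ∑ p : β k, ((2 * (k:ℝ) - 1)⁻¹) ^ ((1:FreeGroup (Fin k)) * gen p).norm :=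
            mul_le_mul_of_nonneg_left step1 (by positivity)
        _ = (2 * (k:ℝ) - 1)⁻¹ := by
            simp only [this, Finset.sum_const, Finset.card_univ, nsmul_eq_mul, card_beta_cast]
            rw [inv_mul_cancel_left₀ (ne_of_gt h2K)]
        _ ≤ ((2 * (k:ℝ) - 1)⁻¹) ^ (1 : FreeGroup (Fin k)).norm := by
            rw [FreeGroup.norm_one, pow_zero]; exact hB1
    · have hne : g.toWord ≠ [] := fun h0 => hg (FreeGroup.toWord_eq_nil_iff.1 h0)
      have ht : g.toWord.getLast? = some (g.toWord.getLast hne) := List.getLast?_eq_getLast hne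
      have hl : 1 ≤ g.norm := norm_pos_of_ne_one hg
      obtain ⟨m, hm⟩ : ∃ m, g.norm = m + 1 := ⟨g.norm - 1, by omega⟩
      calc (2 * (k:ℝ))⁻¹ * ∑ p : β k, convPow (freeUniform k) n (g * gen p)
          ≤ (2 * (k:ℝ))⁻¹ * ∑ p : β k, ((2 * (k:ℝ) - 1)⁻¹) ^ (g * gen p).norm :=
            mul_le_mul_of_nonneg_left step1 (by positivity)
        _ = ((2 * (k:ℝ) - 1)⁻¹) ^ g.norm := by
            rw [sum_gen (fun m => ((2 * (k:ℝ) - 1)⁻¹)^m) ht, card_beta, hm]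
            simp only [Nat.add_sub_cancel]
            have h2 : ((2*k - 1 : ℕ) : ℝ) = 2*(k:ℝ) - 1 := by
              rw [Nat.cast_sub (by omega)]; push_cast; ring
            rw [h2, pow_succ, pow_succ]
            field_simp
            ring
  
lemma En_succ (n : ℕ) :
    En k (n+1) = En k n + (1 - 1/(k:ℝ))
      + convPow (freeUniform k) n 1 * (1/(k:ℝ)) := by
  classical
  have hs := step_sum (k := k) n (fun g => ((g.norm : ℕ) : ℝ))
  have h2K : (0:ℝ) < 2 * (k:ℝ) := two_k_pos hk
  have key : ∀ a ∈ ball k n, convPow (freeUniform k) n a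
        * ((2 * (k:ℝ))⁻¹ * ∑ p : β k, (((a * gen p).norm : ℕ) : ℝ))
      = convPow (freeUniform k) n a * ((a.norm : ℝ) + (1 - 1/(k:ℝ)))
        + (if a = 1 then convPow (freeUniform k) n a * (1/(k:ℝ)) else 0) := by
    intro a _
    by_cases ha : a = 1
    · subst ha
      have hnorm : ∀ p : β k, ((((1:FreeGroup (Fin k)) * gen p).norm : ℕ) : ℝ) = 1 := by
        intro p; rw [one_mul, norm_gen]; norm_num
      simp only [hnorm, Finset.sum_const, Finset.card_univ, nsmul_eq_mul, card_beta_cast,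
        mul_one, if_pos rfl]
      rw [inv_mul_cancel₀ (ne_of_gt h2K), FreeGroup.norm_one]
      push_cast
      ring
    · rw [avg_norm hk ha, if_neg ha, add_zero]
      ring_nf
  rw [show En k (n+1) = ∑ g ∈ ball k (n+1), ((g.norm : ℕ) : ℝ) * convPow (freeUniform k) (n+1) g
      from rfl, hs, Finset.sum_congr rfl key, Finset.sum_add_distrib]
  have e1 : ∑ a ∈ ball k n, convPow (freeUniform k) n a * ((a.norm : ℝ) + (1 - 1/(k:ℝ)))
      = En k n + (1 - 1/(k:ℝ)) := by
    have : ∀ a ∈ ball k n, convPow (freeUniform k) n a * ((a.norm : ℝ) + (1 - 1/(k:ℝ)))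
        = (a.norm : ℝ) * convPow (freeUniform k) n a
          + convPow (freeUniform k) n a * (1 - 1/(k:ℝ)) := fun a _ => by ring
    rw [Finset.sum_congr rfl this, Finset.sum_add_distrib, ← Finset.sum_mul, mass_eq_one hk,
      one_mul]
    rfl
  have e2 : ∑ a ∈ ball k n, (if a = 1 then convPow (freeUniform k) n a * (1/(k:ℝ)) else 0)
      = convPow (freeUniform k) n 1 * (1/(k:ℝ)) := by
    rw [Finset.sum_ite_eq' (ball k n) 1 (fun a => convPow (freeUniform k) n a * (1/(k:ℝ)))]
    rw [if_pos (mem_ball_of_norm_le (by rw [FreeGroup.norm_one]; omega))]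
  rw [e1, e2]

lemma Wn_succ (n : ℕ) : Wn k (n+1) ≤ (7/8) * Wn k n := by
  have hs := step_sum (k := k) n (fun g => ((2:ℝ)⁻¹) ^ g.norm)
  have h1 : Wn k (n+1) = ∑ a ∈ ball k n, convPow (freeUniform k) n a
      * ((2 * (k:ℝ))⁻¹ * ∑ p : β k, ((2:ℝ)⁻¹) ^ (a * gen p).norm) := hs
  rw [h1]
  calc ∑ a ∈ ball k n, convPow (freeUniform k) n a
        * ((2 * (k:ℝ))⁻¹ * ∑ p : β k, ((2:ℝ)⁻¹) ^ (a * gen p).norm)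
      ≤ ∑ a ∈ ball k n, convPow (freeUniform k) n a * ((7/8) * ((2:ℝ)⁻¹) ^ a.norm) :=
        Finset.sum_le_sum fun a _ =>
          mul_le_mul_of_nonneg_left (avg_half hk a) (convPow_nonneg n a)
    _ = (7/8) * Wn k n := by
        rw [Wn, Finset.mul_sum]
        exact Finset.sum_congr rfl fun a _ => by ring

omit hk in
lemma Wn_zero : Wn k 0 = 1 := by
  have := sum_conv_zero (k := k) 0 (fun g => ((2:ℝ)⁻¹) ^ g.norm)
  rw [FreeGroup.norm_one, pow_zero] at this
  exact this

lemma Wn_le (n : ℕ) : Wn k n ≤ ((7:ℝ)/8) ^ n := by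
  induction n with
  | zero => rw [Wn_zero, pow_zero]
  | succ n ih =>
    calc Wn k (n+1) ≤ (7/8) * Wn k n := Wn_succ hk n
      _ ≤ (7/8) * ((7:ℝ)/8) ^ n := by nlinarith
      _ = ((7:ℝ)/8) ^ (n+1) := by rw [pow_succ]; ring

lemma convPow_one_le (n : ℕ) : convPow (freeUniform k) n 1 ≤ ((7:ℝ)/8) ^ n :=
  (convPow_one_le_Wn n).trans (Wn_le hk n)

omit hk in
lemma En_zero : En k 0 = 0 := by
  have := sum_conv_zero (k := k) 0 (fun g => ((g.norm : ℕ) : ℝ))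
  rw [FreeGroup.norm_one] at this
  simpa [En] using this

lemma En_lower (n : ℕ) : (n : ℝ) * (1 - 1/(k:ℝ)) ≤ En k n := by
  induction n with
  | zero => rw [En_zero]; norm_num
  | succ n ih =>
    rw [En_succ hk n]
    have h1 : 0 ≤ convPow (freeUniform k) n 1 * (1/(k:ℝ)) := by
      apply mul_nonneg (convPow_nonneg n 1)
      positivity
    push_cast
    linarith

lemma En_upper (n : ℕ) : En k n ≤ (n : ℝ) * (1 - 1/(k:ℝ)) + 8 := by
  have hK := kR_two hk
  have key : ∀ n : ℕ, En k n ≤ (n : ℝ) * (1 - 1/(k:ℝ)) + 8 * (1 - ((7:ℝ)/8)^n) := by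
    intro n
    induction n with
    | zero => rw [En_zero]; norm_num
    | succ n ih =>
      rw [En_succ hk n]
      have h1 : convPow (freeUniform k) n 1 * (1/(k:ℝ)) ≤ ((7:ℝ)/8)^n * 1 := by
        apply mul_le_mul (convPow_one_le hk n) _ (by positivity) (by positivity)
        rw [div_le_one (by linarith : (0:ℝ) < (k:ℝ))]
        linarith
      have h2 : ((7:ℝ)/8) ^ (n+1) = (7/8) * ((7:ℝ)/8)^n := by rw [pow_succ]; ring
      push_cast
      rw [h2] at *
      nlinarith [pow_nonneg (by norm_num : (0:ℝ) ≤ 7/8) n]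
  have := key n
  have hp : (0:ℝ) ≤ ((7:ℝ)/8)^n := by positivity
  linarith


/-! ### Sphere cardinality bounds -/

def sph (k l : ℕ) : Finset (FreeGroup (Fin k)) :=
  (ball k l).filter (fun g => g.norm = l)

omit hk in
lemma mem_sph {g : FreeGroup (Fin k)} {l : ℕ} : g ∈ sph k l ↔ g.norm = l := by
  constructor
  · exact fun h => (Finset.mem_filter.1 h).2
  · intro h
    exact Finset.mem_filter.2 ⟨mem_ball_of_norm_le (le_of_eq h), h⟩

omit hk in
lemma card_sph_zero : (sph k 0).card ≤ 1 := by
  apply Finset.card_le_one.2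
  intro a ha b hb
  have ha2 := FreeGroup.norm_eq_zero.1 (mem_sph.1 ha)
  have hb2 := FreeGroup.norm_eq_zero.1 (mem_sph.1 hb)
  rw [ha2, hb2]

/-- drop the last letter -/
def D (g : FreeGroup (Fin k)) : FreeGroup (Fin k) := FreeGroup.mk g.toWord.dropLast

omit hk in
lemma toWord_D (g : FreeGroup (Fin k)) : (D g).toWord = g.toWord.dropLast := by
  rw [D, FreeGroup.toWord_mk,
    reduce_eq_self ((isRed_toWord g).prefix (List.dropLast_prefix _))]

omit hk in
lemma D_mem {l : ℕ} {g : FreeGroup (Fin k)} (hg : g ∈ sph k (l+1)) : D g ∈ sph k l := by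
  have hn := mem_sph.1 hg
  apply mem_sph.2
  show (D g).toWord.length = l
  rw [toWord_D, List.length_dropLast]
  show g.norm - 1 = l
  omega

/-- default letter -/
def d0 : β k := (⟨0, by omega⟩, true)

omit hk in
lemma toWord_split {l : ℕ} {g a : FreeGroup (Fin k)} (hg : g ∈ sph k (l+1)) (hD : D g = a)
    (hgne : g.toWord ≠ []) :
    g.toWord = a.toWord ++ [g.toWord.getLast hgne] := by
  have hdrop : g.toWord.dropLast = a.toWord := by rw [← toWord_D, hD]
  rw [← hdrop]
  exact (List.dropLast_append_getLast hgne).symm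

lemma toWord_ne_nil_of_sph {l : ℕ} {g : FreeGroup (Fin k)} (hg : g ∈ sph k (l+1)) :
    g.toWord ≠ [] := by
  have hn := mem_sph.1 hg
  intro h0
  have : g.norm = 0 := by rw [FreeGroup.norm, h0]; rfl
  omega

lemma fiber_inj {l : ℕ} (a : FreeGroup (Fin k)) :
    Set.InjOn (fun g : FreeGroup (Fin k) => g.toWord.getLastD (d0 hk))
      ((sph k (l+1)).filter (fun g => D g = a)) := by
  intro g hg g' hg' heq
  obtain ⟨hg1, hg2⟩ := Finset.mem_filter.1 hg
  obtain ⟨hg1', hg2'⟩ := Finset.mem_filter.1 hg'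
  have hgne := toWord_ne_nil_of_sph hk hg1
  have hgne' := toWord_ne_nil_of_sph hk hg1'
  have hs := toWord_split hg1 hg2 hgne
  have hs' := toWord_split hg1' hg2' hgne'
  have hL : g.toWord.getLastD (d0 hk) = g.toWord.getLast hgne := by
    rw [List.getLastD_eq_getLast?, List.getLast?_eq_getLast hgne]
    rfl
  have hL' : g'.toWord.getLastD (d0 hk) = g'.toWord.getLast hgne' := by
    rw [List.getLastD_eq_getLast?, List.getLast?_eq_getLast hgne']
    rfl
  apply FreeGroup.toWord_injective
  rw [hs, hs', ← hL, ← hL']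
  simp only at heq
  rw [heq]

lemma card_fiber_le0 (a : FreeGroup (Fin k)) :
    ((sph k 1).filter (fun g => D g = a)).card ≤ 2 * k := by
  have h := Finset.card_le_card_of_injOn (s := (sph k 1).filter (fun g => D g = a))
    (t := (Finset.univ : Finset (β k)))
    (fun g : FreeGroup (Fin k) => g.toWord.getLastD (d0 hk))
    (fun g _ => Finset.mem_univ _) (fiber_inj hk (l := 0) a)
  rw [Finset.card_univ, card_beta] at h
  exact h

lemma card_fiber_le1 {l : ℕ} (hl : 1 ≤ l) {a : FreeGroup (Fin k)} (ha : a.norm = l) :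
    ((sph k (l+1)).filter (fun g => D g = a)).card ≤ 2 * k - 1 := by
  have hane : a.toWord ≠ [] := by
    intro h0
    have : a.norm = 0 := by rw [FreeGroup.norm, h0]; rfl
    omega
  set t := a.toWord.getLast hane with htdef
  have hcard : ((Finset.univ : Finset (β k)).erase (fl t)).card = 2 * k - 1 := by
    rw [Finset.card_erase_of_mem (Finset.mem_univ _), Finset.card_univ, card_beta]
  rw [← hcard]
  apply Finset.card_le_card_of_injOn
    (fun g : FreeGroup (Fin k) => g.toWord.getLastD (d0 hk)) _ (fiber_inj hk a)
  intro g hg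
  obtain ⟨hg1, hg2⟩ := Finset.mem_filter.1 hg
  have hgne := toWord_ne_nil_of_sph hk hg1
  have hs := toWord_split hg1 hg2 hgne
  have hL : g.toWord.getLastD (d0 hk) = g.toWord.getLast hgne := by
    rw [List.getLastD_eq_getLast?, List.getLast?_eq_getLast hgne]
    rfl
  show g.toWord.getLastD (d0 hk) ∈ _
  rw [hL]
  refine Finset.mem_erase.2 ⟨?_, Finset.mem_univ _⟩
  have hred : IsRed g.toWord := isRed_toWord g
  rw [hs] at hred
  have hrel := (List.isChain_append.1 hred).2.2
  have hcond : cond t (g.toWord.getLast hgne) := by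
    apply hrel
    · rw [Option.mem_def, List.getLast?_eq_getLast hane]
    · rw [List.head?_cons, Option.mem_def]
  intro heq
  apply hcond
  rw [heq]
  exact ⟨rfl, by simp [fl]⟩

lemma card_sph_le : ∀ l : ℕ, (sph k l).card ≤ 2 * (2*k - 1)^l := by
  intro l
  induction l with
  | zero =>
    have := card_sph_zero (k := k)
    simpa using this.trans (by norm_num)
  | succ l ih =>
    have himage : (sph k (l+1)).image (D (k := k)) ⊆ sph k l :=
      Finset.image_subset_iff.2 fun g hg => D_mem hg
    have himcard : ((sph k (l+1)).image (D (k := k))).card ≤ (sph k l).card :=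
      Finset.card_le_card himage
    rcases Nat.eq_zero_or_pos l with hl | hl
    · subst hl
      have hb := Finset.card_le_mul_card_image (f := D (k := k)) (sph k 1) (2*k)
        (fun a ha => card_fiber_le0 hk a)
      have h0 : ((sph k 1).image (D (k := k))).card ≤ 1 := himcard.trans card_sph_zero
      calc (sph k 1).card ≤ 2*k * ((sph k 1).image (D (k := k))).card := hb
        _ ≤ 2*k * 1 := Nat.mul_le_mul_left _ h0
        _ ≤ 2 * (2*k - 1)^1 := by
            rw [pow_one]
            omega
    · have hb := Finset.card_le_mul_card_image (f := D (k := k)) (sph k (l+1)) (2*k - 1)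
        (fun a ha => by
          obtain ⟨g, hg, rfl⟩ := Finset.mem_image.1 ha
          exact card_fiber_le1 hk hl (mem_sph.1 (D_mem hg)))
      calc (sph k (l+1)).card ≤ (2*k - 1) * ((sph k (l+1)).image (D (k := k))).card := hb
        _ ≤ (2*k - 1) * (sph k l).card := Nat.mul_le_mul_left _ himcard
        _ ≤ (2*k - 1) * (2 * (2*k - 1)^l) := Nat.mul_le_mul_left _ ih
        _ = 2 * (2*k - 1)^(l+1) := by rw [pow_succ]; ring

lemma sum_pow_ball (n : ℕ) :
    ∑ g ∈ ball k n, ((2*(k:ℝ) - 1)⁻¹) ^ g.norm ≤ 2 * ((n:ℝ) + 1) := by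
  classical
  have hmaps : ∀ g ∈ ball k n, g.norm ∈ Finset.range (n+1) :=
    fun g hg => Finset.mem_range.2 (Nat.lt_succ_of_le (norm_le_of_mem_ball hg))
  rw [← Finset.sum_fiberwise_of_maps_to hmaps]
  have hc0 : (0:ℝ) < 2 * (k:ℝ) - 1 := by
    have := kR_two hk; linarith
  have key : ∀ l ∈ Finset.range (n+1),
      ∑ g ∈ (ball k n).filter (fun g => g.norm = l), ((2*(k:ℝ) - 1)⁻¹) ^ g.norm ≤ 2 := by
    intro l _
    have hsub : (ball k n).filter (fun g => g.norm = l) ⊆ sph k l := by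
      intro g hg
      exact mem_sph.2 (Finset.mem_filter.1 hg).2
    have heq : ∀ g ∈ (ball k n).filter (fun g => g.norm = l),
        ((2*(k:ℝ) - 1)⁻¹) ^ g.norm = ((2*(k:ℝ) - 1)⁻¹) ^ l := by
      intro g hg
      rw [(Finset.mem_filter.1 hg).2]
    rw [Finset.sum_congr rfl heq, Finset.sum_const, nsmul_eq_mul]
    have hcard : (((ball k n).filter (fun g => g.norm = l)).card : ℝ)
        ≤ 2 * (2*(k:ℝ) - 1)^l := by
      have h1 : ((ball k n).filter (fun g => g.norm = l)).card ≤ 2 * (2*k - 1)^l :=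
        (Finset.card_le_card hsub).trans (card_sph_le hk l)
      calc (((ball k n).filter (fun g => g.norm = l)).card : ℝ)
          ≤ ((2 * (2*k - 1)^l : ℕ) : ℝ) := by exact_mod_cast h1
        _ = 2 * (2*(k:ℝ) - 1)^l := by
            push_cast [Nat.cast_sub (by omega : 1 ≤ 2*k)]
            ring
    calc (((ball k n).filter (fun g => g.norm = l)).card : ℝ) * ((2*(k:ℝ) - 1)⁻¹) ^ l
        ≤ 2 * (2*(k:ℝ) - 1)^l * ((2*(k:ℝ) - 1)⁻¹) ^ l := by
          apply mul_le_mul_of_nonneg_right hcard (by positivity)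
      _ = 2 := by
          rw [mul_assoc, ← mul_pow, mul_inv_cancel₀ (ne_of_gt hc0), one_pow, mul_one]
  calc ∑ l ∈ Finset.range (n+1), ∑ g ∈ (ball k n).filter (fun g => g.norm = l),
        ((2*(k:ℝ) - 1)⁻¹) ^ g.norm
      ≤ ∑ l ∈ Finset.range (n+1), (2:ℝ) := Finset.sum_le_sum key
    _ = 2 * ((n:ℝ) + 1) := by
        rw [Finset.sum_const, Finset.card_range, nsmul_eq_mul]
        push_cast
        ring


/-! ### Entropy bounds -/

omit hk in
lemma shannon_eq (n : ℕ) :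
    shannonEntropy (convPow (freeUniform k) n)
      = -∑ g ∈ ball k n, convPow (freeUniform k) n g
          * Real.log (convPow (freeUniform k) n g) := by
  rw [shannonEntropy]
  congr 1
  apply finsum_eq_sum'
  intro g hg
  have : convPow (freeUniform k) n g ≠ 0 := fun h0 => hg (by rw [h0, zero_mul])
  exact mem_ball_of_norm_le (convPow_norm_le this)

lemma H_lower (n : ℕ) :
    En k n * Real.log (2*(k:ℝ) - 1) ≤ shannonEntropy (convPow (freeUniform k) n) := by
  have hc0 : (0:ℝ) < 2 * (k:ℝ) - 1 := by have := kR_two hk; linarith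
  rw [shannon_eq, ← Finset.sum_neg_distrib, En, Finset.sum_mul]
  apply Finset.sum_le_sum
  intro g _
  set f := convPow (freeUniform k) n g with hfdef
  rcases eq_or_lt_of_le (convPow_nonneg (k := k) n g) with hf | hf
  · rw [show f = 0 from hf.symm]
    norm_num
  · have hle : f ≤ ((2*(k:ℝ) - 1)⁻¹) ^ g.norm := convPow_le_pow hk n g
    have hlog : Real.log f ≤ (g.norm : ℝ) * -Real.log (2*(k:ℝ) - 1) := by
      calc Real.log f ≤ Real.log (((2*(k:ℝ) - 1)⁻¹) ^ g.norm) := Real.log_le_log hf hle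
        _ = (g.norm : ℝ) * Real.log ((2*(k:ℝ) - 1)⁻¹) := Real.log_pow _ _
        _ = (g.norm : ℝ) * -Real.log (2*(k:ℝ) - 1) := by rw [Real.log_inv]
    have h2 : f * Real.log f ≤ f * ((g.norm : ℝ) * -Real.log (2*(k:ℝ) - 1)) :=
      mul_le_mul_of_nonneg_left hlog hf.le
    nlinarith [h2]

lemma H_upper (n : ℕ) :
    shannonEntropy (convPow (freeUniform k) n)
      ≤ En k n * Real.log (2*(k:ℝ) - 1) + Real.log 2 + Real.log ((n:ℝ) + 1) := by
  classical
  have hc0 : (0:ℝ) < 2 * (k:ℝ) - 1 := by have := kR_two hk; linarith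
  have hn1 : (0:ℝ) < (n:ℝ) + 1 := by positivity
  set logc := Real.log (2*(k:ℝ) - 1) with hlogc
  set π : FreeGroup (Fin k) → ℝ :=
    fun g => (2:ℝ)⁻¹ * ((n:ℝ)+1)⁻¹ * ((2*(k:ℝ) - 1)⁻¹) ^ g.norm with hπ
  have hπpos : ∀ g, 0 < π g := fun g => by positivity
  have hpoint : ∀ g ∈ ball k n,
      -(convPow (freeUniform k) n g * Real.log (convPow (freeUniform k) n g))
        ≤ (π g - convPow (freeUniform k) n g)
          + convPow (freeUniform k) n g
            * (Real.log 2 + Real.log ((n:ℝ)+1) + (g.norm : ℝ) * logc) := by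
    intro g _
    set f := convPow (freeUniform k) n g with hfdef
    rcases eq_or_lt_of_le (convPow_nonneg (k := k) n g) with hf | hf
    · rw [show f = 0 from hf.symm]
      have := hπpos g
      norm_num
      linarith
    · have hπg := hπpos g
      have h1 : f * Real.log (π g / f) ≤ π g - f := by
        have hlog := Real.log_le_sub_one_of_pos (div_pos hπg hf)
        have := mul_le_mul_of_nonneg_left hlog hf.le
        have hcan : f * (π g / f) = π g := by have hf0 : f ≠ 0 := hf.ne'; field_simp
        rw [mul_sub, mul_one, hcan] at this
        exact this
      have hlogπ : Real.log (π g) = -(Real.log 2 + Real.log ((n:ℝ)+1) + (g.norm : ℝ) * logc) := by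
        rw [hπ]
        simp only
        rw [Real.log_mul (by positivity) (by positivity),
          Real.log_mul (by norm_num) (by positivity), Real.log_inv, Real.log_inv,
          Real.log_pow, Real.log_inv, hlogc]
        push_cast
        ring
      have hsplit : Real.log (π g / f) = Real.log (π g) - Real.log f :=
        Real.log_div (ne_of_gt hπg) (ne_of_gt hf)
      have heq : -(f * Real.log f)
          = f * Real.log (π g / f)
            + f * (Real.log 2 + Real.log ((n:ℝ)+1) + (g.norm : ℝ) * logc) := by
        rw [hsplit, hlogπ]
        ring
      rw [heq]
      linarith
  have hsum : ∑ g ∈ ball k n, π g ≤ 1 := by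
    rw [hπ]
    have : ∑ g ∈ ball k n, (2:ℝ)⁻¹ * ((n:ℝ)+1)⁻¹ * ((2*(k:ℝ) - 1)⁻¹) ^ g.norm
        = (2:ℝ)⁻¹ * ((n:ℝ)+1)⁻¹ * ∑ g ∈ ball k n, ((2*(k:ℝ) - 1)⁻¹) ^ g.norm := by
      rw [Finset.mul_sum]
    rw [this]
    have hb := sum_pow_ball hk n
    calc (2:ℝ)⁻¹ * ((n:ℝ)+1)⁻¹ * ∑ g ∈ ball k n, ((2*(k:ℝ) - 1)⁻¹) ^ g.norm
        ≤ (2:ℝ)⁻¹ * ((n:ℝ)+1)⁻¹ * (2 * ((n:ℝ)+1)) := by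
          apply mul_le_mul_of_nonneg_left hb (by positivity)
      _ = 1 := by field_simp
  calc shannonEntropy (convPow (freeUniform k) n)
      = ∑ g ∈ ball k n, -(convPow (freeUniform k) n g
          * Real.log (convPow (freeUniform k) n g)) := by
        rw [shannon_eq, ← Finset.sum_neg_distrib]
    _ ≤ ∑ g ∈ ball k n, ((π g - convPow (freeUniform k) n g)
          + convPow (freeUniform k) n g
            * (Real.log 2 + Real.log ((n:ℝ)+1) + (g.norm : ℝ) * logc)) :=
        Finset.sum_le_sum hpoint
    _ = (∑ g ∈ ball k n, π g) - 1
          + (Real.log 2 + Real.log ((n:ℝ)+1)) + En k n * logc := by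
        rw [Finset.sum_add_distrib, Finset.sum_sub_distrib, mass_eq_one hk]
        have : ∑ g ∈ ball k n, convPow (freeUniform k) n g
            * (Real.log 2 + Real.log ((n:ℝ)+1) + (g.norm : ℝ) * logc)
            = ∑ g ∈ ball k n, (convPow (freeUniform k) n g
                * (Real.log 2 + Real.log ((n:ℝ)+1))
              + ((g.norm : ℝ) * convPow (freeUniform k) n g) * logc) := by
          exact Finset.sum_congr rfl fun g _ => by ring
        rw [this, Finset.sum_add_distrib, ← Finset.sum_mul, ← Finset.sum_mul,
          mass_eq_one hk, one_mul, En]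
        ring
    _ ≤ En k n * logc + Real.log 2 + Real.log ((n:ℝ)+1) := by linarith

end FGE


/-- The entropy of the pair `(F_k, μ)`, `μ` uniform on the natural generators and their
inverses, equals `((k−1)/k)·log(2k−1)`: `lim H(μ^{*n})/n = ((k−1)/k)·log(2k−1)`. -/
theorem freeGroup_entropy (k : ℕ) (hk : 2 ≤ k) :
    Tendsto (fun n : ℕ => shannonEntropy (convPow (freeUniform k) n) / (n : ℝ))
      atTop (nhds ((((k : ℝ) - 1) / (k : ℝ)) * Real.log (2 * (k : ℝ) - 1))) := by
  have hK : (2:ℝ) ≤ (k:ℝ) := by exact_mod_cast hk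
  have hk0 : (0:ℝ) < (k:ℝ) := by linarith
  have hc0 : (0:ℝ) < 2*(k:ℝ) - 1 := by linarith
  have hlogc : 0 ≤ Real.log (2*(k:ℝ) - 1) := Real.log_nonneg (by linarith)
  set L := (((k:ℝ) - 1) / (k:ℝ)) * Real.log (2 * (k:ℝ) - 1) with hL
  have hLeq : ((k:ℝ) - 1)/(k:ℝ) = 1 - 1/(k:ℝ) := by field_simp
  have hlow : ∀ n : ℕ, 1 ≤ n → L ≤ shannonEntropy (convPow (freeUniform k) n) / n := by
    intro n hn
    have hnp : (0:ℝ) < (n:ℝ) := by exact_mod_cast hn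
    rw [le_div_iff₀ hnp]
    calc L * n = ((n:ℝ) * (1 - 1/(k:ℝ))) * Real.log (2*(k:ℝ) - 1) := by
          rw [hL, hLeq]; ring
      _ ≤ FGE.En k n * Real.log (2*(k:ℝ) - 1) :=
          mul_le_mul_of_nonneg_right (FGE.En_lower hk n) hlogc
      _ ≤ _ := FGE.H_lower hk n
  have hupp : ∀ n : ℕ, 1 ≤ n → shannonEntropy (convPow (freeUniform k) n) / n
      ≤ L + (8 * Real.log (2*(k:ℝ) - 1) + Real.log 2) / n + Real.log ((n:ℝ)+1) / n := by
    intro n hn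
    have hnp : (0:ℝ) < (n:ℝ) := by exact_mod_cast hn
    have h1 : shannonEntropy (convPow (freeUniform k) n)
        ≤ (n:ℝ) * (1 - 1/(k:ℝ)) * Real.log (2*(k:ℝ) - 1) + 8 * Real.log (2*(k:ℝ) - 1)
          + Real.log 2 + Real.log ((n:ℝ)+1) := by
      have h2 := FGE.H_upper hk n
      have h3 : FGE.En k n * Real.log (2*(k:ℝ) - 1)
          ≤ ((n:ℝ) * (1 - 1/(k:ℝ)) + 8) * Real.log (2*(k:ℝ) - 1) :=
        mul_le_mul_of_nonneg_right (FGE.En_upper hk n) hlogc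
      nlinarith
    calc shannonEntropy (convPow (freeUniform k) n) / n
        ≤ ((n:ℝ) * (1 - 1/(k:ℝ)) * Real.log (2*(k:ℝ) - 1) + 8 * Real.log (2*(k:ℝ) - 1)
            + Real.log 2 + Real.log ((n:ℝ)+1)) / n := by
          exact div_le_div_of_nonneg_right h1 hnp.le
      _ = L + (8 * Real.log (2*(k:ℝ) - 1) + Real.log 2) / n + Real.log ((n:ℝ)+1) / n := by
          rw [hL, hLeq]
          field_simp
          ring
  have hlim1 : Tendsto (fun n : ℕ => (8 * Real.log (2*(k:ℝ) - 1) + Real.log 2) / n)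
      atTop (nhds 0) := tendsto_const_div_atTop_nhds_zero_nat _
  have hlim2 : Tendsto (fun n : ℕ => Real.log ((n:ℝ)+1) / n) atTop (nhds 0) := by
    have ha : Tendsto (fun n : ℕ => ((n:ℝ)+1)) atTop atTop :=
      tendsto_atTop_add_const_right _ 1 tendsto_natCast_atTop_atTop
    have hb : Tendsto (fun n : ℕ => Real.log ((n:ℝ)+1) / ((n:ℝ)+1)) atTop (nhds 0) :=
      (Real.isLittleO_log_id_atTop.tendsto_div_nhds_zero).comp ha
    have hc : Tendsto (fun n : ℕ => ((n:ℝ)+1) / (n:ℝ)) atTop (nhds 1) := by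
      have h1 : Tendsto (fun n : ℕ => 1 + 1/(n:ℝ)) atTop (nhds (1+0)) :=
        tendsto_const_nhds.add tendsto_one_div_atTop_nhds_zero_nat
      rw [add_zero] at h1
      apply h1.congr'
      filter_upwards [eventually_ge_atTop 1] with n hn
      have hnp : ((n:ℝ)) ≠ 0 := by
        have : (0:ℝ) < (n:ℝ) := by exact_mod_cast hn
        linarith
      field_simp
    have hprod := hb.mul hc
    rw [zero_mul] at hprod
    apply hprod.congr'
    filter_upwards [eventually_ge_atTop 1] with n hn
    have hnp : ((n:ℝ)) ≠ 0 := by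
      have : (0:ℝ) < (n:ℝ) := by exact_mod_cast hn
      linarith
    have hnp1 : ((n:ℝ)+1) ≠ 0 := by positivity
    field_simp
  have hlimU : Tendsto (fun n : ℕ => L + (8 * Real.log (2*(k:ℝ) - 1) + Real.log 2) / n
      + Real.log ((n:ℝ)+1) / n) atTop (nhds L) := by
    have := ((tendsto_const_nhds (x := L) (f := atTop)).add hlim1).add hlim2
    simpa using this
  apply tendsto_of_tendsto_of_tendsto_of_le_of_le' tendsto_const_nhds hlimU
  · filter_upwards [eventually_ge_atTop 1] with n hn
    exact hlow n hn
  · filter_upwards [eventually_ge_atTop 1] with n hn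
    exact hupp n hn
end
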